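/- arXiv:2410.06665 — 8 statements merged into one kernel-verified Lean document; each statement's English description precedes it below -/
import Mathlib

section
/- For every n ≥ 4, the space of real n×n matrices is the internal direct sum of the seven subspaces V_0, V_1, V_2, V_3, V_4, V_5, V_6, and each of these subspaces is invariant under the S_n action (σ·X)_{ij} = X_{σ⁻¹(i),σ⁻¹(j)}. -/
/-!
A matrix is determined, up to a matrix with zero diagonal and zero row and column sums, by its
margins: its diagonal, its row sums and its column sums. The margins of
`a I + b (J - I) + diag d + r 1ᵀ + 1 cᵀ` with `∑ d = ∑ r = ∑ c = 0` are an invertible linear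
function of `(a, b, d, r, c)` onto the triples whose row sums and column sums have the same total:
the trace and the total give `a` and `b`, and then `d`, `r`, `c` solve a linear system that is
singular only for `n = 2`. This accounts for `V₀ ⊕ ⋯ ⊕ V₄`. A matrix with vanishing margins splits
uniquely into its antisymmetric part, in `V₅`, and its symmetric part, in `V₆`.
-/

open Matrix

namespace GraphDecomp

variable (n : ℕ)

/-- The action of `Sₙ` on `n × n` matrices: `(σ · X) i j = X (σ⁻¹ i) (σ⁻¹ j)`. -/
def act (σ : Equiv.Perm (Fin n)) (X : Matrix (Fin n) (Fin n) ℝ) :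
    Matrix (Fin n) (Fin n) ℝ :=
  Matrix.of fun i j => X (σ⁻¹ i) (σ⁻¹ j)

/-- The all-ones matrix `J`. -/
def J : Matrix (Fin n) (Fin n) ℝ := Matrix.of fun _ _ => (1 : ℝ)

/-- `V₀`: multiples of the identity. -/
def V0 : Submodule ℝ (Matrix (Fin n) (Fin n) ℝ) where
  carrier := {X | ∃ a : ℝ, X = a • (1 : Matrix (Fin n) (Fin n) ℝ)}
  zero_mem' := ⟨0, by simp⟩
  add_mem' := by
    rintro X Y ⟨a, rfl⟩ ⟨b, rfl⟩
    exact ⟨a + b, (add_smul a b _).symm⟩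
  smul_mem' := by
    rintro c X ⟨a, rfl⟩
    exact ⟨c * a, (mul_smul c a _).symm⟩

/-- `V₁`: multiples of `J - I`. -/
def V1 : Submodule ℝ (Matrix (Fin n) (Fin n) ℝ) where
  carrier := {X | ∃ a : ℝ, X = a • (J n - 1)}
  zero_mem' := ⟨0, by simp⟩
  add_mem' := by
    rintro X Y ⟨a, rfl⟩ ⟨b, rfl⟩
    exact ⟨a + b, (add_smul a b _).symm⟩
  smul_mem' := by
    rintro c X ⟨a, rfl⟩
    exact ⟨c * a, (mul_smul c a _).symm⟩

/-- `V₂`: diagonal matrices with trace zero. -/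
def V2 : Submodule ℝ (Matrix (Fin n) (Fin n) ℝ) where
  carrier := {X | (∀ i j, i ≠ j → X i j = 0) ∧ ∑ i, X i i = 0}
  zero_mem' := ⟨fun _ _ _ => rfl, by simp⟩
  add_mem' := by
    rintro X Y ⟨hX1, hX2⟩ ⟨hY1, hY2⟩
    refine ⟨fun i j hij => ?_, ?_⟩
    · simp [Matrix.add_apply, hX1 i j hij, hY1 i j hij]
    · simp [Matrix.add_apply, Finset.sum_add_distrib, hX2, hY2]
  smul_mem' := by
    rintro c X ⟨hX1, hX2⟩
    refine ⟨fun i j hij => ?_, ?_⟩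
    · simp [Matrix.smul_apply, hX1 i j hij]
    · simp [Matrix.smul_apply, ← Finset.mul_sum, hX2]

/-- `V₃`: matrices `r ⬝ 1ᵀ` with constant rows, `∑ rᵢ = 0`. -/
def V3 : Submodule ℝ (Matrix (Fin n) (Fin n) ℝ) where
  carrier := {X | ∃ r : Fin n → ℝ, (∑ i, r i) = 0 ∧ X = Matrix.of fun i _ => r i}
  zero_mem' := ⟨0, by simp, rfl⟩
  add_mem' := by
    rintro X Y ⟨r, hr, rfl⟩ ⟨r', hr', rfl⟩
    exact ⟨r + r', by simp [Finset.sum_add_distrib, hr, hr'], by ext i j; simp⟩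
  smul_mem' := by
    rintro c X ⟨r, hr, rfl⟩
    exact ⟨c • r, by simp [← Finset.mul_sum, hr], by ext i j; simp⟩

/-- `V₄`: matrices `1 ⬝ cᵀ` with constant columns, `∑ cⱼ = 0`. -/
def V4 : Submodule ℝ (Matrix (Fin n) (Fin n) ℝ) where
  carrier := {X | ∃ c : Fin n → ℝ, (∑ j, c j) = 0 ∧ X = Matrix.of fun _ j => c j}
  zero_mem' := ⟨0, by simp, rfl⟩
  add_mem' := by
    rintro X Y ⟨r, hr, rfl⟩ ⟨r', hr', rfl⟩
    exact ⟨r + r', by simp [Finset.sum_add_distrib, hr, hr'], by ext i j; simp⟩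
  smul_mem' := by
    rintro c X ⟨r, hr, rfl⟩
    exact ⟨c • r, by simp [← Finset.mul_sum, hr], by ext i j; simp⟩

/-- `V₅`: antisymmetric matrices whose rows sum to zero. -/
def V5 : Submodule ℝ (Matrix (Fin n) (Fin n) ℝ) where
  carrier := {X | X = -Xᵀ ∧ ∀ i, ∑ j, X i j = 0}
  zero_mem' := ⟨by simp, by simp⟩
  add_mem' := by
    rintro X Y ⟨hX1, hX2⟩ ⟨hY1, hY2⟩
    refine ⟨?_, fun i => ?_⟩
    · rw [Matrix.transpose_add, neg_add]
      exact congrArg₂ (· + ·) hX1 hY1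
    · simp [Matrix.add_apply, Finset.sum_add_distrib, hX2 i, hY2 i]
  smul_mem' := by
    rintro c X ⟨hX1, hX2⟩
    refine ⟨?_, fun i => ?_⟩
    · rw [Matrix.transpose_smul, ← smul_neg]
      exact congrArg (c • ·) hX1
    · simp [Matrix.smul_apply, ← Finset.mul_sum, hX2 i]

/-- `V₆`: symmetric matrices with zero diagonal whose rows sum to zero. -/
def V6 : Submodule ℝ (Matrix (Fin n) (Fin n) ℝ) where
  carrier := {X | X = Xᵀ ∧ (∀ i, ∑ j, X i j = 0) ∧ ∀ i, X i i = 0}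
  zero_mem' := ⟨by simp, by simp, by simp⟩
  add_mem' := by
    rintro X Y ⟨hX1, hX2, hX3⟩ ⟨hY1, hY2, hY3⟩
    refine ⟨?_, fun i => ?_, fun i => ?_⟩
    · rw [Matrix.transpose_add]
      exact congrArg₂ (· + ·) hX1 hY1
    · simp [Matrix.add_apply, Finset.sum_add_distrib, hX2 i, hY2 i]
    · simp [Matrix.add_apply, hX3 i, hY3 i]
  smul_mem' := by
    rintro c X ⟨hX1, hX2, hX3⟩
    refine ⟨?_, fun i => ?_, fun i => ?_⟩
    · rw [Matrix.transpose_smul]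
      exact congrArg (c • ·) hX1
    · simp [Matrix.smul_apply, ← Finset.mul_sum, hX2 i]
    · simp [Matrix.smul_apply, hX3 i]

/-- The family of the seven subspaces `V₀, …, V₆`. -/
def V : Fin 7 → Submodule ℝ (Matrix (Fin n) (Fin n) ℝ) :=
  ![V0 n, V1 n, V2 n, V3 n, V4 n, V5 n, V6 n]

theorem _root_.DirectSum.isInternal_submodule_of_forall_exists_sum_eq
    {ι R M : Type*} [Fintype ι] [DecidableEq ι] [Ring R] [AddCommGroup M] [Module R M]
    {p : ι → Submodule R M}
    (hspan : ∀ x, ∃ v : ι → M, (∀ i, v i ∈ p i) ∧ ∑ i, v i = x)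
    (hindep : ∀ v : ι → M, (∀ i, v i ∈ p i) → ∑ i, v i = 0 → ∀ i, v i = 0) :
    DirectSum.IsInternal p := by
  refine DirectSum.isInternal_submodule_of_iSupIndep_of_iSup_eq_top ?_ ?_
  · rw [iSupIndep_iff_finsetSum_eq_zero_imp_eq_zero]
    intro s v hv hsum i hi
    have hext := hindep (fun j => if j ∈ s then v j else 0)
      (fun j => by split_ifs with hj; exacts [hv j hj, zero_mem _])
      (by rwa [Finset.sum_ite_mem, Finset.univ_inter]) i
    simpa [hi] using hext
  · refine Submodule.eq_top_iff'.2 fun x => ?_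
    obtain ⟨v, hv, rfl⟩ := hspan x
    exact Submodule.sum_mem_iSup hv

section Invariance

variable {n} (σ : Equiv.Perm (Fin n)) (X : Matrix (Fin n) (Fin n) ℝ)

theorem act_transpose : act n σ Xᵀ = (act n σ X)ᵀ := rfl

theorem act_neg : act n σ (-X) = -act n σ X := rfl

theorem act_sub (Y : Matrix (Fin n) (Fin n) ℝ) : act n σ (X - Y) = act n σ X - act n σ Y := rfl

theorem act_smul (a : ℝ) : act n σ (a • X) = a • act n σ X := rfl

theorem act_one : act n σ 1 = 1 := by
  ext i j
  simp [act, one_apply]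

theorem act_J : act n σ (J n) = J n := rfl

theorem sum_act_apply (i : Fin n) : ∑ j, act n σ X i j = ∑ j, X (σ⁻¹ i) j :=
  Equiv.sum_comp σ⁻¹ (X (σ⁻¹ i))

theorem act_mem_V (k : Fin 7) (hX : X ∈ V n k) : act n σ X ∈ V n k := by
  fin_cases k
  · obtain ⟨a, rfl⟩ := hX
    exact ⟨a, by rw [act_smul, act_one]⟩
  · obtain ⟨a, rfl⟩ := hX
    exact ⟨a, by rw [act_smul, act_sub, act_J, act_one]⟩
  · obtain ⟨hoff, htr⟩ := hX
    exact ⟨fun i j hij => hoff _ _ (σ⁻¹.injective.ne hij), (Equiv.sum_comp σ⁻¹ _).trans htr⟩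
  · obtain ⟨r, hr, rfl⟩ := hX
    exact ⟨r ∘ ⇑σ⁻¹, (Equiv.sum_comp σ⁻¹ r).trans hr, rfl⟩
  · obtain ⟨c, hc, rfl⟩ := hX
    exact ⟨c ∘ ⇑σ⁻¹, (Equiv.sum_comp σ⁻¹ c).trans hc, rfl⟩
  · obtain ⟨hanti, hrow⟩ := hX
    refine ⟨?_, fun i => (sum_act_apply σ X i).trans (hrow _)⟩
    rw [← act_transpose, ← act_neg, ← hanti]
  · obtain ⟨hsymm, hrow, hdiag⟩ := hX
    refine ⟨?_, fun i => (sum_act_apply σ X i).trans (hrow _), fun i => hdiag _⟩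
    rw [← act_transpose, ← hsymm]

end Invariance

section Margins

def margins : Matrix (Fin n) (Fin n) ℝ →ₗ[ℝ] (Fin n → ℝ) × (Fin n → ℝ) × (Fin n → ℝ) where
  toFun X := (X.diag, fun i => ∑ j, X i j, fun j => ∑ i, X i j)
  map_add' X Y := by ext <;> simp [Finset.sum_add_distrib]
  map_smul' c X := by ext <;> simp [Finset.mul_sum]

def marginPart (a b : ℝ) (d r c : Fin n → ℝ) : Matrix (Fin n) (Fin n) ℝ :=
  a • 1 + b • (J n - 1) + diagonal d + of (fun i _ => r i) + of (fun _ j => c j)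

variable {n}

theorem margins_apply (X : Matrix (Fin n) (Fin n) ℝ) :
    margins n X = (X.diag, fun i => ∑ j, X i j, fun j => ∑ i, X i j) := rfl

theorem margins_transpose (X : Matrix (Fin n) (Fin n) ℝ) :
    margins n Xᵀ = ((margins n X).1, (margins n X).2.2, (margins n X).2.1) := rfl

theorem marginPart_apply (a b : ℝ) (d r c : Fin n → ℝ) (i j : Fin n) :
    marginPart n a b d r c i j = (if i = j then a - b + d i else 0) + b + r i + c j := by
  by_cases h : i = j
  · subst h
    simp [marginPart, J]
    ring
  · simp [marginPart, J, one_apply, h]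

theorem margins_marginPart (a b : ℝ) (d r c : Fin n → ℝ) :
    margins n (marginPart n a b d r c) =
      (fun i => a + d i + r i + c i,
        fun i => a + (n - 1) * b + d i + n * r i + ∑ j, c j,
        fun j => a + (n - 1) * b + d j + n * c j + ∑ i, r i) := by
  refine Prod.ext (funext fun i => ?_) (Prod.ext (funext fun i => ?_) (funext fun j => ?_))
  · simp [margins_apply, marginPart_apply]
    ring
  · simp [margins_apply, marginPart_apply, Finset.sum_add_distrib]
    ring
  · simp [margins_apply, marginPart_apply, Finset.sum_add_distrib]
    ring

theorem eq_zero_of_margins_marginPart_eq_zero (hn : 3 ≤ n) {a b : ℝ} {d r c : Fin n → ℝ}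
    (hd : ∑ i, d i = 0) (hr : ∑ i, r i = 0) (hc : ∑ i, c i = 0)
    (h : margins n (marginPart n a b d r c) = 0) : a = 0 ∧ b = 0 ∧ d = 0 ∧ r = 0 ∧ c = 0 := by
  have hn' : (3 : ℝ) ≤ n := by exact_mod_cast hn
  simp only [margins_marginPart, hr, hc, add_zero, Prod.mk_eq_zero] at h
  obtain ⟨hdiag, hrow, hcol⟩ := h
  have ha : a = 0 := by
    have htrace := congrArg (fun f => ∑ i, f i) hdiag
    simp [Finset.sum_add_distrib, hd, hr, hc] at htrace
    exact htrace.resolve_left (by omega)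
  have hb : b = 0 := by
    have htotal := congrArg (fun f => ∑ i, f i) hrow
    simp [Finset.sum_add_distrib, hd, hr, ← Finset.mul_sum, ha] at htotal
    exact (htotal.resolve_left (by omega)).resolve_left (by linarith)
  have hpoint : ∀ i, d i = 0 ∧ r i = 0 ∧ c i = 0 := by
    intro i
    have e1 := congrFun hdiag i
    have e2 := congrFun hrow i
    have e3 := congrFun hcol i
    simp only [ha, hb, Pi.zero_apply, zero_add, mul_zero] at e1 e2 e3
    have hrc : r i = c i := mul_left_cancel₀ (by linarith : (0 : ℝ) < n).ne' (by linarith)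
    have hri : r i = 0 := by
      have h2 : ((n : ℝ) - 2) * r i = 0 := by linear_combination e2 - e1 - hrc
      exact (mul_eq_zero.1 h2).resolve_left (by linarith)
    exact ⟨by linarith, hri, by linarith⟩
  exact ⟨ha, hb, funext fun i => (hpoint i).1, funext fun i => (hpoint i).2.1,
    funext fun i => (hpoint i).2.2⟩

theorem sum_sub_mean_eq_zero (f : Fin n → ℝ) (hn : n ≠ 0) : ∑ i, (f i - (∑ j, f j) / n) = 0 := by
  simp only [Finset.sum_sub_distrib, Finset.sum_const, Finset.card_univ, Fintype.card_fin,
    nsmul_eq_mul]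
  field_simp
  ring

theorem exists_margins_marginPart_eq (hn : 3 ≤ n) (δ ρ γ : Fin n → ℝ)
    (h : ∑ i, ρ i = ∑ j, γ j) :
    ∃ (a b : ℝ) (d r c : Fin n → ℝ), ∑ i, d i = 0 ∧ ∑ i, r i = 0 ∧ ∑ i, c i = 0 ∧
      margins n (marginPart n a b d r c) = (δ, ρ, γ) := by
  have hn' : (3 : ℝ) ≤ n := by exact_mod_cast hn
  have hn0 : (n : ℝ) ≠ 0 := by linarith
  set τ := ∑ i, δ i
  set t := ∑ i, ρ i
  set p : Fin n → ℝ := fun i => ρ i - t / n with hp_def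
  set q : Fin n → ℝ := fun i => γ i - t / n with hq_def
  set e : Fin n → ℝ := fun i => δ i - τ / n with he_def
  -- In terms of the deviations `p, q, e` the system reads `p = d + n r`, `q = d + n c`,
  -- `e = d + r + c`, hence `(n - 2) d = n e - p - q`.
  set d : Fin n → ℝ := fun i => (n * e i - p i - q i) / (n - 2) with hd_def
  have hp : ∑ i, p i = 0 := sum_sub_mean_eq_zero ρ (by omega)
  have hq : ∑ i, q i = 0 := by
    simp only [hq_def, h]
    exact sum_sub_mean_eq_zero γ (by omega)
  have he : ∑ i, e i = 0 := sum_sub_mean_eq_zero δ (by omega)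
  have hd : ∑ i, d i = 0 := by
    simp only [hd_def, ← Finset.sum_div, Finset.sum_sub_distrib, ← Finset.mul_sum, hp, hq, he]
    simp
  have hr : ∑ i, (p i - d i) / n = 0 := by
    simp only [← Finset.sum_div, Finset.sum_sub_distrib, hp, hd]
    simp
  have hc : ∑ i, (q i - d i) / n = 0 := by
    simp only [← Finset.sum_div, Finset.sum_sub_distrib, hq, hd]
    simp
  refine ⟨τ / n, (t - τ) / (n * (n - 1)), d, fun i => (p i - d i) / n, fun i => (q i - d i) / n,
    hd, hr, hc, ?_⟩
  rw [margins_marginPart, hr, hc]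
  have hn2 : (n : ℝ) - 2 ≠ 0 := by linarith
  have hn1 : (n : ℝ) - 1 ≠ 0 := by linarith
  refine Prod.ext (funext fun i => ?_) (Prod.ext (funext fun i => ?_) (funext fun j => ?_)) <;>
  · simp only [hd_def, hp_def, hq_def, he_def]
    field_simp
    ring

theorem mem_ker_margins_iff {X : Matrix (Fin n) (Fin n) ℝ} :
    X ∈ LinearMap.ker (margins n) ↔
      (∀ i, X i i = 0) ∧ (∀ i, ∑ j, X i j = 0) ∧ ∀ j, ∑ i, X i j = 0 := by
  simp [margins_apply, Prod.ext_iff, funext_iff]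

theorem transpose_mem_ker_margins {X : Matrix (Fin n) (Fin n) ℝ}
    (hX : X ∈ LinearMap.ker (margins n)) : Xᵀ ∈ LinearMap.ker (margins n) := by
  rw [LinearMap.mem_ker] at hX ⊢
  rw [margins_transpose, hX]
  rfl

theorem V5_le_ker_margins : V5 n ≤ LinearMap.ker (margins n) := by
  rintro X ⟨hanti, hrow⟩
  have hX : ∀ i j, X i j = -X j i := fun i j => congrFun (congrFun hanti i) j
  refine mem_ker_margins_iff.2 ⟨fun i => ?_, hrow, fun j => ?_⟩
  · linarith [hX i i]
  · simp [hX _ j, hrow j]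

theorem V6_le_ker_margins : V6 n ≤ LinearMap.ker (margins n) := by
  rintro X ⟨hsymm, hrow, hdiag⟩
  have hX : ∀ i j, X i j = X j i := fun i j => congrFun (congrFun hsymm i) j
  refine mem_ker_margins_iff.2 ⟨hdiag, hrow, fun j => ?_⟩
  simp [hX _ j, hrow j]

theorem smul_sub_transpose_mem_V5 {X : Matrix (Fin n) (Fin n) ℝ}
    (hX : X ∈ LinearMap.ker (margins n)) : (2⁻¹ : ℝ) • (X - Xᵀ) ∈ V5 n := by
  have hA := Submodule.smul_mem _ (2⁻¹ : ℝ) (sub_mem hX (transpose_mem_ker_margins hX))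
  refine ⟨?_, (mem_ker_margins_iff.1 hA).2.1⟩
  rw [transpose_smul, transpose_sub, transpose_transpose, ← smul_neg, neg_sub]

theorem smul_add_transpose_mem_V6 {X : Matrix (Fin n) (Fin n) ℝ}
    (hX : X ∈ LinearMap.ker (margins n)) : (2⁻¹ : ℝ) • (X + Xᵀ) ∈ V6 n := by
  have hS := Submodule.smul_mem _ (2⁻¹ : ℝ) (add_mem hX (transpose_mem_ker_margins hX))
  refine ⟨?_, (mem_ker_margins_iff.1 hS).2.1, (mem_ker_margins_iff.1 hS).1⟩
  rw [transpose_smul, transpose_add, transpose_transpose, add_comm]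

theorem disjoint_V5_V6 : Disjoint (V5 n) (V6 n) := by
  refine Submodule.disjoint_def.2 fun X ⟨hanti, _⟩ ⟨hsymm, _⟩ => ?_
  ext i j
  have h1 := congrFun (congrFun hanti i) j
  have h2 := congrFun (congrFun hsymm i) j
  simp only [Matrix.neg_apply, transpose_apply] at h1 h2
  rw [Matrix.zero_apply]
  linarith

theorem exists_mem_V_sum_eq (hn : 3 ≤ n) (X : Matrix (Fin n) (Fin n) ℝ) :
    ∃ m : Fin 7 → Matrix (Fin n) (Fin n) ℝ, (∀ k, m k ∈ V n k) ∧ ∑ k, m k = X := by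
  obtain ⟨a, b, d, r, c, hd, hr, hc, hm⟩ := exists_margins_marginPart_eq hn
    (margins n X).1 (margins n X).2.1 (margins n X).2.2
    (by simp only [margins_apply]; exact Finset.sum_comm)
  set B := X - marginPart n a b d r c
  have hB : B ∈ LinearMap.ker (margins n) := LinearMap.sub_mem_ker_iff.2 hm.symm
  refine ⟨![a • 1, b • (J n - 1), diagonal d, of fun i _ => r i, of fun _ j => c j,
    (2⁻¹ : ℝ) • (B - Bᵀ), (2⁻¹ : ℝ) • (B + Bᵀ)], fun k => ?_, ?_⟩
  · fin_cases k
    exacts [⟨a, rfl⟩, ⟨b, rfl⟩, ⟨isDiag_diagonal d, by simpa using hd⟩, ⟨r, hr, rfl⟩, ⟨c, hc, rfl⟩,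
      smul_sub_transpose_mem_V5 hB, smul_add_transpose_mem_V6 hB]
  · calc _ = marginPart n a b d r c + ((2⁻¹ : ℝ) • (B - Bᵀ) + (2⁻¹ : ℝ) • (B + Bᵀ)) := by
          simp [Fin.sum_univ_seven, marginPart, add_assoc]
      _ = marginPart n a b d r c + B := by module
      _ = X := add_sub_cancel _ _

theorem eq_zero_of_mem_V_of_sum_eq_zero (hn : 3 ≤ n) (m : Fin 7 → Matrix (Fin n) (Fin n) ℝ)
    (hm : ∀ k, m k ∈ V n k) (hsum : ∑ k, m k = 0) : ∀ k, m k = 0 := by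
  obtain ⟨a, h0⟩ : m 0 ∈ V0 n := hm 0
  obtain ⟨b, h1⟩ : m 1 ∈ V1 n := hm 1
  obtain ⟨h2, htr⟩ : m 2 ∈ V2 n := hm 2
  obtain ⟨r, hr, h3⟩ : m 3 ∈ V3 n := hm 3
  obtain ⟨c, hc, h4⟩ : m 4 ∈ V4 n := hm 4
  have h5 : m 5 ∈ V5 n := hm 5
  have h6 : m 6 ∈ V6 n := hm 6
  have h2' : m 2 = diagonal (m 2).diag := ((isDiag_iff_diagonal_diag _).1 h2).symm
  have hsplit : marginPart n a b (m 2).diag r c = -(m 5 + m 6) := by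
    rw [Fin.sum_univ_seven, h0, h1, h2', h3, h4] at hsum
    exact eq_neg_of_add_eq_zero_left (by rw [← add_assoc]; exact hsum)
  have hker : marginPart n a b (m 2).diag r c ∈ LinearMap.ker (margins n) := by
    rw [hsplit]
    exact neg_mem (add_mem (V5_le_ker_margins h5) (V6_le_ker_margins h6))
  obtain ⟨rfl, rfl, hd0, rfl, rfl⟩ :=
    eq_zero_of_margins_marginPart_eq_zero hn (d := (m 2).diag) htr hr hc hker
  have hzero : marginPart n 0 0 0 0 0 = 0 := by
    ext i j
    simp [marginPart_apply]
  rw [hd0, hzero, eq_comm, neg_eq_zero] at hsplit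
  have h56 : m 5 = -m 6 := eq_neg_of_add_eq_zero_left hsplit
  have h5z : m 5 = 0 := Submodule.disjoint_def.1 disjoint_V5_V6 _ h5 (h56 ▸ neg_mem h6)
  intro k
  fin_cases k
  · simp [h0]
  · simp [h1]
  · exact h2'.trans (by rw [hd0]; exact diagonal_zero)
  · exact h3
  · exact h4
  · exact h5z
  · simpa [h5z] using h56

theorem isInternal_V (hn : 3 ≤ n) : DirectSum.IsInternal (V n) :=
  DirectSum.isInternal_submodule_of_forall_exists_sum_eq (exists_mem_V_sum_eq hn)
    (eq_zero_of_mem_V_of_sum_eq_zero hn)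

end Margins

/-- For `n ≥ 4`, `ℝⁿˣⁿ` is the internal direct sum of
`V₀, …, V₆`, and each of them is invariant under the `Sₙ`-action. -/
theorem matrixSpace_isInternal_directSum_of_seven (hn : 4 ≤ n) :
    DirectSum.IsInternal (V n) ∧
      ∀ (i : Fin 7) (σ : Equiv.Perm (Fin n)) (X : Matrix (Fin n) (Fin n) ℝ),
        X ∈ V n i → act n σ X ∈ V n i :=
  ⟨isInternal_V (by omega), fun i σ X => act_mem_V σ X i⟩

end GraphDecomp
end

section
/- For every n ≥ 4, the real vector space of linear maps T : ℝ^{n×n} → ℝ^{n×n} satisfying T(σ·X) = σ·T(X) for all σ ∈ S_n and all X ∈ ℝ^{n×n} has dimension exactly 15. -/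
/-!
An equivariant `T` is determined by its coefficients `T(E_{kl})_{ij}`, and equivariance says
exactly that this function of the quadruple `(i, j, k, l) ∈ [n]⁴` is constant on `Sₙ`-orbits.
Two quadruples lie in the same orbit iff they have the same equality pattern, i.e. the same kernel
as maps `Fin 4 → Fin n`. When `n ≥ 4` every equivalence relation on `Fin 4` occurs as such a
kernel, so the dimension is the number of set partitions of a 4-element set, the Bell number
`B₄ = 15`.
-/

open Matrix

namespace IGN2

variable (n : ℕ)

/-- The action of `Sₙ` on `n × n` matrices: `(σ · X) i j = X (σ⁻¹ i) (σ⁻¹ j)`. -/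
def act (σ : Equiv.Perm (Fin n)) (X : Matrix (Fin n) (Fin n) ℝ) :
    Matrix (Fin n) (Fin n) ℝ :=
  Matrix.of fun i j => X (σ⁻¹ i) (σ⁻¹ j)

theorem act_add (σ : Equiv.Perm (Fin n)) (X Y : Matrix (Fin n) (Fin n) ℝ) :
    act n σ (X + Y) = act n σ X + act n σ Y := by
  ext i j; simp [act]

theorem act_smul (σ : Equiv.Perm (Fin n)) (c : ℝ) (X : Matrix (Fin n) (Fin n) ℝ) :
    act n σ (c • X) = c • act n σ X := by
  ext i j; simp [act]

/-- The space of `Sₙ`-equivariant linear endomorphisms of `ℝⁿˣⁿ`. -/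
noncomputable def EquivariantMaps :
    Submodule ℝ (Matrix (Fin n) (Fin n) ℝ →ₗ[ℝ] Matrix (Fin n) (Fin n) ℝ) where
  carrier := {T | ∀ (σ : Equiv.Perm (Fin n)) (X : Matrix (Fin n) (Fin n) ℝ),
    T (act n σ X) = act n σ (T X)}
  zero_mem' := by
    intro σ X
    simp only [LinearMap.zero_apply]
    ext i j; simp [act]
  add_mem' := by
    intro T T' hT hT' σ X
    simp [LinearMap.add_apply, hT σ X, hT' σ X, act_add]
  smul_mem' := by
    intro c T hT σ X
    simp [LinearMap.smul_apply, hT σ X, act_smul]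

section InvariantFunctions

variable (R G X : Type*) [Semiring R] [Group G] [MulAction G X]

def invariantFunctions : Submodule R (X → R) where
  carrier := {f | ∀ (g : G) (x : X), f (g • x) = f x}
  zero_mem' _ _ := rfl
  add_mem' hf hg g x := by simp [hf g x, hg g x]
  smul_mem' c f hf g x := by simp [hf g x]

def invariantFunctionsEquivOrbitsFun :
    invariantFunctions R G X ≃ₗ[R] (MulAction.orbitRel.Quotient G X → R) where
  toFun f := Quotient.lift f.1 (by rintro x y ⟨g, rfl⟩; exact f.2 g y)
  invFun φ := ⟨φ ∘ Quotient.mk _, fun g x => congrArg φ (Quotient.sound ⟨g, rfl⟩)⟩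
  map_add' f g := by ext q; induction q using Quotient.inductionOn; rfl
  map_smul' c f := by ext q; induction q using Quotient.inductionOn; rfl
  left_inv f := rfl
  right_inv φ := by ext q; induction q using Quotient.inductionOn; rfl

theorem finrank_invariantFunctions [StrongRankCondition R] [Finite X] :
    Module.finrank R (invariantFunctions R G X) = Nat.card (MulAction.orbitRel.Quotient G X) := by
  have := Fintype.ofFinite (MulAction.orbitRel.Quotient G X)
  rw [(invariantFunctionsEquivOrbitsFun R G X).finrank_eq, Module.finrank_pi,
    Nat.card_eq_fintype_card]

end InvariantFunctions


section Coefficients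

open Equiv

theorem act_single (σ : Perm (Fin n)) (k l : Fin n) :
    act n σ (single k l (1 : ℝ)) = single (σ k) (σ l) 1 := by
  ext i j
  simp [act, single_apply, Perm.inv_def, eq_symm_apply]

@[simps]
def coeffs :
    (Matrix (Fin n) (Fin n) ℝ →ₗ[ℝ] Matrix (Fin n) (Fin n) ℝ) →ₗ[ℝ] ((Fin 4 → Fin n) → ℝ) where
  toFun T t := T (single (t 2) (t 3) 1) (t 0) (t 1)
  map_add' _ _ := rfl
  map_smul' _ _ := rfl

@[simps]
def ofCoeffs (f : (Fin 4 → Fin n) → ℝ) :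
    Matrix (Fin n) (Fin n) ℝ →ₗ[ℝ] Matrix (Fin n) (Fin n) ℝ where
  toFun X := of fun i j => ∑ k, ∑ l, f ![i, j, k, l] * X k l
  map_add' X Y := by ext; simp [mul_add, Finset.sum_add_distrib]
  map_smul' c X := by ext; simp [Finset.mul_sum, mul_left_comm]

theorem coeffs_injective : Function.Injective (coeffs n) := by
  intro T T' h
  refine (stdBasis ℝ (Fin n) (Fin n)).ext fun ⟨k, l⟩ => ?_
  ext i j
  rw [stdBasis_eq_single]
  exact congrFun h ![i, j, k, l]

theorem coeffs_ofCoeffs (f : (Fin 4 → Fin n) → ℝ) : coeffs n (ofCoeffs n f) = f := by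
  funext t
  have ht : ![t 0, t 1, t 2, t 3] = t := FinVec.etaExpand_eq t
  simp [single, ite_and, ht]

theorem coeffs_mem_invariantFunctions
    {T : Matrix (Fin n) (Fin n) ℝ →ₗ[ℝ] Matrix (Fin n) (Fin n) ℝ} (hT : T ∈ EquivariantMaps n) :
    coeffs n T ∈ invariantFunctions ℝ (Perm (Fin n)) (Fin 4 → Fin n) := by
  intro σ t
  simp only [coeffs_apply, Pi.smul_apply, Perm.smul_def, ← act_single, hT σ]
  simp [act]

theorem ofCoeffs_mem_equivariantMaps {f : (Fin 4 → Fin n) → ℝ}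
    (hf : f ∈ invariantFunctions ℝ (Perm (Fin n)) (Fin 4 → Fin n)) :
    ofCoeffs n f ∈ EquivariantMaps n := by
  intro σ X
  ext i j
  simp only [ofCoeffs_apply, act, of_apply]
  refine Fintype.sum_equiv σ⁻¹ _ _ fun k => Fintype.sum_equiv σ⁻¹ _ _ fun l => ?_
  congr 1
  simpa [Perm.smul_def] using (hf σ⁻¹ ![i, j, k, l]).symm

def equivariantMapsEquivInvariantFunctions :
    EquivariantMaps n ≃ₗ[ℝ] invariantFunctions ℝ (Perm (Fin n)) (Fin 4 → Fin n) where
  toFun T := ⟨coeffs n T, coeffs_mem_invariantFunctions n T.2⟩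
  invFun f := ⟨ofCoeffs n f, ofCoeffs_mem_equivariantMaps n f.2⟩
  map_add' _ _ := rfl
  map_smul' _ _ := rfl
  left_inv T := Subtype.ext (coeffs_injective n (coeffs_ofCoeffs n (coeffs n T)))
  right_inv f := Subtype.ext (coeffs_ofCoeffs n f)

end Coefficients

section Kernels

open Equiv MulAction

variable {ι α : Type*}

theorem ker_perm_smul (σ : Perm α) (t : ι → α) : Setoid.ker (σ • t) = Setoid.ker t := by
  ext i j
  simp [Setoid.ker_def, Perm.smul_def]

theorem exists_perm_smul_eq_of_ker_eq [Finite α] {s t : ι → α}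
    (h : Setoid.ker s = Setoid.ker t) : ∃ σ : Perm α, σ • s = t := by
  classical
  let e : Set.range s ≃ Set.range t := (Setoid.quotientKerEquivRange s).symm.trans
    ((Quotient.congrRight fun i j => by rw [h]).trans (Setoid.quotientKerEquivRange t))
  refine ⟨e.extendSubtype, funext fun i => ?_⟩
  rw [Pi.smul_apply, Perm.smul_def, extendSubtype_apply_of_mem e _ ⟨i, rfl⟩]
  have hs : (Setoid.quotientKerEquivRange s).symm ⟨s i, ⟨i, rfl⟩⟩ = Quotient.mk _ i :=
    (Equiv.symm_apply_eq _).2 rfl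
  simp only [e, Equiv.trans_apply, hs]
  rfl

theorem exists_ker_eq_of_card_le [Fintype ι] [Fintype α]
    (h : Fintype.card ι ≤ Fintype.card α) (r : Setoid ι) : ∃ t : ι → α, Setoid.ker t = r := by
  classical
  obtain ⟨e⟩ : Nonempty (Quotient r ↪ α) :=
    Function.Embedding.nonempty_of_card_le ((Fintype.card_quotient_le r).trans h)
  exact ⟨e ∘ Quotient.mk r, by ext i j; simp [Setoid.ker_def, Quotient.eq]⟩

noncomputable def orbitRelQuotientEquivSetoid [Fintype ι] [Fintype α]
    (h : Fintype.card ι ≤ Fintype.card α) : orbitRel.Quotient (Perm α) (ι → α) ≃ Setoid ι :=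
  Equiv.ofBijective
    (Quotient.lift Setoid.ker (by rintro _ t ⟨σ, rfl⟩; exact ker_perm_smul σ t))
    ⟨by
      rintro ⟨s⟩ ⟨t⟩ hst
      obtain ⟨σ, hσ⟩ := exists_perm_smul_eq_of_ker_eq hst.symm
      exact Quotient.sound ⟨σ, hσ⟩,
    fun r => let ⟨t, ht⟩ := exists_ker_eq_of_card_le h r
      ⟨Quotient.mk _ t, ht⟩⟩

theorem card_setoid_eq_card_range [Fintype ι] [DecidableEq ι] :
    Nat.card (Setoid ι) =
      Nat.card (Set.range fun (t : ι → ι) (i j : ι) => decide (t i = t j)) := by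
  classical
  let f : Setoid ι → ι → ι → Bool := fun r i j => decide (r i j)
  have hf : Function.Injective f := fun r r' h =>
    Setoid.ext fun i j => by simpa [f] using congrFun (congrFun h i) j
  have hker : Function.Surjective (Setoid.ker : (ι → ι) → Setoid ι) :=
    exists_ker_eq_of_card_le le_rfl
  have hfker : f ∘ Setoid.ker = fun (t : ι → ι) (i j : ι) => decide (t i = t j) := by
    funext t i j
    exact decide_eq_decide.2 Setoid.ker_def
  rw [← Nat.card_range_of_injective hf, ← hker.range_comp, hfker]

end Kernels

theorem card_setoid_fin_four : Nat.card (Setoid (Fin 4)) = 15 := by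
  rw [card_setoid_eq_card_range, Nat.card_eq_card_toFinset, Set.toFinset_range]
  decide +kernel

/-- For `n ≥ 4`, the space of `Sₙ`-equivariant linear
endomorphisms of `ℝⁿˣⁿ` has dimension exactly 15. -/
theorem finrank_equivariantMaps_eq_fifteen (hn : 4 ≤ n) :
    Module.finrank ℝ (EquivariantMaps n) = 15 := by
  rw [(equivariantMapsEquivInvariantFunctions n).finrank_eq, finrank_invariantFunctions,
    Nat.card_congr (orbitRelQuotientEquivSetoid (by simpa using hn)), card_setoid_fin_four]

end IGN2
end

section
/- For all a, b ≥ 2, the real vector space of linear maps T : ℝ^{a×b} → ℝ^{a×b} satisfying T((σ,τ)·W) = (σ,τ)·T(W) for all (σ,τ) ∈ S_a × S_b and W ∈ ℝ^{a×b} has dimension exactly 4. -/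
/-!
An equivariant `T` is determined by its coefficients `T (single k l 1) i j`, which are invariant
under the diagonal action of `S_a × S_b` on the index pairs `(i, k)` and `(l, j)`. For `n ≥ 2`,
`S_n` has exactly two orbits on `Fin n × Fin n`, the diagonal and its complement, so a coefficient
depends only on whether `i = k` and whether `l = j`. Hence the four maps `W ↦ A * W * B` with
`A, B ∈ {1, J - 1}` form a basis of the equivariant maps.
-/

open Matrix

namespace WeightDim

variable (a b : ℕ)

/-- The action of `S_a × S_b` on `a × b` matrices:
`((σ, τ) · W) i j = W (σ⁻¹ i) (τ⁻¹ j)`. -/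
def act (σ : Equiv.Perm (Fin a)) (τ : Equiv.Perm (Fin b))
    (W : Matrix (Fin a) (Fin b) ℝ) : Matrix (Fin a) (Fin b) ℝ :=
  Matrix.of fun i j => W (σ⁻¹ i) (τ⁻¹ j)

theorem act_add (σ : Equiv.Perm (Fin a)) (τ : Equiv.Perm (Fin b))
    (X Y : Matrix (Fin a) (Fin b) ℝ) :
    act a b σ τ (X + Y) = act a b σ τ X + act a b σ τ Y := by
  ext i j; simp [act]

theorem act_smul (σ : Equiv.Perm (Fin a)) (τ : Equiv.Perm (Fin b)) (c : ℝ)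
    (X : Matrix (Fin a) (Fin b) ℝ) :
    act a b σ τ (c • X) = c • act a b σ τ X := by
  ext i j; simp [act]

/-- The space of `S_a × S_b`-equivariant linear endomorphisms of `ℝ^{a×b}`. -/
noncomputable def EquivariantMaps :
    Submodule ℝ (Matrix (Fin a) (Fin b) ℝ →ₗ[ℝ] Matrix (Fin a) (Fin b) ℝ) where
  carrier := {T | ∀ (σ : Equiv.Perm (Fin a)) (τ : Equiv.Perm (Fin b))
    (W : Matrix (Fin a) (Fin b) ℝ), T (act a b σ τ W) = act a b σ τ (T W)}
  zero_mem' := by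
    intro σ τ W
    simp only [LinearMap.zero_apply]
    ext i j; simp [act]
  add_mem' := by
    intro T T' hT hT' σ τ W
    simp [LinearMap.add_apply, hT σ τ W, hT' σ τ W, act_add]
  smul_mem' := by
    intro c T hT σ τ W
    simp [LinearMap.smul_apply, hT σ τ W, act_smul]

theorem mul_single_one_mul_apply {l m n o R : Type*} [Fintype m] [Fintype n] [DecidableEq m]
    [DecidableEq n] [NonAssocSemiring R] (A : Matrix l m R) (B : Matrix n o R) (k : m) (k' : n)
    (i : l) (j : o) : (A * single k k' (1 : R) * B) i j = A i k * B k' j := by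
  simp [mul_apply, single_apply, ite_and, Finset.sum_ite_eq]

section Orbitals

variable {α : Type*} [DecidableEq α]

theorem exists_perm_apply_eq_apply_eq_of_iff {i k i' k' : α} (h : i = k ↔ i' = k') :
    ∃ σ : Equiv.Perm α, σ i = i' ∧ σ k = k' := by
  by_cases hik : i = k
  · subst hik
    exact ⟨Equiv.swap i i', Equiv.swap_apply_left _ _, by simp [h.mp rfl]⟩
  · have hik' : i' ≠ k' := mt h.mpr hik
    have hk : Equiv.swap i i' k ≠ i' := by
      rw [Ne, Equiv.swap_apply_eq_iff, Equiv.swap_apply_right]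
      exact Ne.symm hik
    refine ⟨Equiv.swap (Equiv.swap i i' k) k' * Equiv.swap i i', ?_, ?_⟩
    · simp [Equiv.swap_apply_of_ne_of_ne hk.symm hik']
    · simp

theorem exists_decide_eq_eq [Nontrivial α] (p : Bool) : ∃ i k : α, decide (i = k) = p := by
  cases p
  · obtain ⟨i, k, hik⟩ := exists_pair_ne α
    exact ⟨i, k, decide_eq_false hik⟩
  · exact ⟨Classical.arbitrary α, _, decide_eq_true rfl⟩

variable (α) (R : Type*) [Zero R] [One R]

/-- `orbitalMatrix α R true = 1` and `orbitalMatrix α R false = J - 1`: the indicators of the two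
orbits of `Equiv.Perm α` on `α × α`. -/
def orbitalMatrix (p : Bool) : Matrix α α R :=
  Matrix.of fun i k => if decide (i = k) = p then 1 else 0

theorem orbitalMatrix_submatrix_perm (p : Bool) (σ : Equiv.Perm α) :
    (orbitalMatrix α R p).submatrix σ σ = orbitalMatrix α R p := by
  ext i k
  simp [orbitalMatrix]

end Orbitals

section Equivariant

variable {a b}

theorem act_eq_submatrix (σ : Equiv.Perm (Fin a)) (τ : Equiv.Perm (Fin b))
    (W : Matrix (Fin a) (Fin b) ℝ) : act a b σ τ W = W.submatrix ⇑σ⁻¹ ⇑τ⁻¹ :=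
  rfl

theorem act_single (σ : Equiv.Perm (Fin a)) (τ : Equiv.Perm (Fin b)) (k : Fin a) (l : Fin b)
    (c : ℝ) : act a b σ τ (single k l c) = single (σ k) (τ l) c := by
  ext i j
  simp only [act, single_apply, of_apply, Equiv.Perm.inv_def, Equiv.eq_symm_apply, eq_comm]

theorem mul_act_mul {A : Matrix (Fin a) (Fin a) ℝ} {B : Matrix (Fin b) (Fin b) ℝ}
    (hA : ∀ σ : Equiv.Perm (Fin a), A.submatrix σ σ = A)
    (hB : ∀ τ : Equiv.Perm (Fin b), B.submatrix τ τ = B) (σ : Equiv.Perm (Fin a))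
    (τ : Equiv.Perm (Fin b)) (W : Matrix (Fin a) (Fin b) ℝ) :
    A * act a b σ τ W * B = act a b σ τ (A * W * B) := by
  rw [act_eq_submatrix, act_eq_submatrix]
  conv_lhs => rw [← hA σ⁻¹, ← hB τ⁻¹]
  simp

theorem apply_single_apply_perm {T : Matrix (Fin a) (Fin b) ℝ →ₗ[ℝ] Matrix (Fin a) (Fin b) ℝ}
    (hT : T ∈ EquivariantMaps a b) (σ : Equiv.Perm (Fin a)) (τ : Equiv.Perm (Fin b))
    (i k : Fin a) (j l : Fin b) :
    T (single (σ k) (τ l) 1) (σ i) (τ j) = T (single k l 1) i j := by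
  have h := congr($(hT σ τ (single k l 1)) (σ i) (τ j))
  rw [act_single] at h
  simpa [act] using h

theorem apply_single_apply_eq_of_iff {T : Matrix (Fin a) (Fin b) ℝ →ₗ[ℝ] Matrix (Fin a) (Fin b) ℝ}
    (hT : T ∈ EquivariantMaps a b) {i k i' k' : Fin a} {j l j' l' : Fin b}
    (hik : i = k ↔ i' = k') (hlj : l = j ↔ l' = j') :
    T (single k l 1) i j = T (single k' l' 1) i' j' := by
  obtain ⟨σ, rfl, rfl⟩ := exists_perm_apply_eq_apply_eq_of_iff hik
  obtain ⟨τ, rfl, rfl⟩ := exists_perm_apply_eq_apply_eq_of_iff hlj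
  exact (apply_single_apply_perm hT σ τ i k j l).symm

theorem exists_apply_single_apply_eq [Nontrivial (Fin a)] [Nontrivial (Fin b)]
    {T : Matrix (Fin a) (Fin b) ℝ →ₗ[ℝ] Matrix (Fin a) (Fin b) ℝ} (hT : T ∈ EquivariantMaps a b) :
    ∃ c : Bool × Bool → ℝ, ∀ k i l j, T (single k l 1) i j = c (decide (i = k), decide (l = j)) := by
  choose i k hik using exists_decide_eq_eq (α := Fin a)
  choose l j hlj using exists_decide_eq_eq (α := Fin b)
  refine ⟨fun pq => T (single (k pq.1) (l pq.2) 1) (i pq.1) (j pq.2), fun k' i' l' j' => ?_⟩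
  exact apply_single_apply_eq_of_iff hT (by rw [← decide_eq_decide, hik])
    (by rw [← decide_eq_decide, hlj])

variable (a b) in
def orbitalMap (pq : Bool × Bool) : Matrix (Fin a) (Fin b) ℝ →ₗ[ℝ] Matrix (Fin a) (Fin b) ℝ :=
  mulRightLinearMap (Fin a) ℝ (orbitalMatrix (Fin b) ℝ pq.2) ∘ₗ
    mulLeftLinearMap (Fin b) ℝ (orbitalMatrix (Fin a) ℝ pq.1)

theorem orbitalMap_apply (pq : Bool × Bool) (W : Matrix (Fin a) (Fin b) ℝ) :
    orbitalMap a b pq W = orbitalMatrix (Fin a) ℝ pq.1 * W * orbitalMatrix (Fin b) ℝ pq.2 :=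
  rfl

theorem orbitalMap_mem_equivariantMaps (pq : Bool × Bool) :
    orbitalMap a b pq ∈ EquivariantMaps a b := fun σ τ W => by
  simp only [orbitalMap_apply]
  exact mul_act_mul (orbitalMatrix_submatrix_perm _ ℝ pq.1) (orbitalMatrix_submatrix_perm _ ℝ pq.2)
    σ τ W

theorem sum_smul_orbitalMap_single_apply (c : Bool × Bool → ℝ) (k i : Fin a) (l j : Fin b) :
    (∑ pq, c pq • orbitalMap a b pq) (single k l 1) i j = c (decide (i = k), decide (l = j)) := by
  simp only [LinearMap.sum_apply, LinearMap.smul_apply, Matrix.sum_apply, Matrix.smul_apply,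
    orbitalMap_apply, mul_single_one_mul_apply, orbitalMatrix, of_apply]
  simp [Fintype.sum_prod_type, em]

theorem linearIndependent_orbitalMap [Nontrivial (Fin a)] [Nontrivial (Fin b)] :
    LinearIndependent ℝ (orbitalMap a b) := by
  refine Fintype.linearIndependent_iff.mpr fun c hc pq => ?_
  obtain ⟨i, k, hik⟩ := exists_decide_eq_eq (α := Fin a) pq.1
  obtain ⟨l, j, hlj⟩ := exists_decide_eq_eq (α := Fin b) pq.2
  simpa [sum_smul_orbitalMap_single_apply, hik, hlj] using congr($hc (single k l 1) i j)

theorem span_orbitalMap [Nontrivial (Fin a)] [Nontrivial (Fin b)] :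
    Submodule.span ℝ (Set.range (orbitalMap a b)) = EquivariantMaps a b := by
  refine le_antisymm (Submodule.span_le.mpr (Set.range_subset_iff.mpr
    orbitalMap_mem_equivariantMaps)) fun T hT => ?_
  obtain ⟨c, hc⟩ := exists_apply_single_apply_eq hT
  refine (Submodule.mem_span_range_iff_exists_fun ℝ).mpr ⟨c, ?_⟩
  refine ext_linearMap ℝ fun k l => LinearMap.ext_ring (ext fun i j => ?_)
  rw [LinearMap.comp_apply, LinearMap.comp_apply, singleLinearMap_apply,
    sum_smul_orbitalMap_single_apply, hc]

end Equivariant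

/-- For `a, b ≥ 2`, the space of `S_a × S_b`-equivariant
linear endomorphisms of `ℝ^{a×b}` has dimension exactly 4. -/
theorem finrank_equivariantMaps_eq_four (ha : 2 ≤ a) (hb : 2 ≤ b) :
    Module.finrank ℝ (EquivariantMaps a b) = 4 := by
  have : Nontrivial (Fin a) := Fin.nontrivial_iff_two_le.mpr ha
  have : Nontrivial (Fin b) := Fin.nontrivial_iff_two_le.mpr hb
  rw [← span_orbitalMap, finrank_span_eq_card linearIndependent_orbitalMap]
  simp

end WeightDim
end

section
/- Let G be a group acting linearly on a real vector space V such that V is irreducible (the only G-invariant subspaces of V are 0 and V) and the action is nontrivial (there exist g ∈ G and v ∈ V with g·v ≠ v). Let k ≥ 1. Then every subspace W of V^k = (Fin k → V) that is invariant both under the componentwise action of G^k, given by (g_1,…,g_k)·(v_1,…,v_k) = (g_1·v_1,…,g_k·v_k), and under permutation of coordinates by every τ ∈ S_k, is either the zero subspace or all of V^k. -/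
/-- If `V` is an irreducible nontrivial real representation of
a group `G`, then for `k ≥ 1` every subspace of `Vᵏ` invariant under both the
componentwise `Gᵏ`-action and coordinate permutations by `S_k` is `⊥` or `⊤`. -/
theorem power_of_irreducible_is_wreath_irreducible
    {G V : Type*} [Group G] [AddCommGroup V] [Module ℝ V]
    (ρ : Representation ℝ G V)
    (hirr : ∀ U : Submodule ℝ V, (∀ (g : G) (v : V), v ∈ U → ρ g v ∈ U) →
      U = ⊥ ∨ U = ⊤)
    (hnontrivial : ∃ (g : G) (v : V), ρ g v ≠ v)
    (k : ℕ) (hk : 1 ≤ k)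
    (W : Submodule ℝ (Fin k → V))
    (hWG : ∀ (g : Fin k → G) (v : Fin k → V), v ∈ W → (fun i => ρ (g i) (v i)) ∈ W)
    (hWS : ∀ (τ : Equiv.Perm (Fin k)) (v : Fin k → V), v ∈ W →
      (fun i => v (τ⁻¹ i)) ∈ W) :
    W = ⊥ ∨ W = ⊤ := by
  classical
  by_cases hW : W = ⊥
  · exact Or.inl hW
  right
  -- Every nonzero vector of V is moved by some g.
  have hfix : ∀ u : V, u ≠ 0 → ∃ g : G, ρ g u ≠ u := by
    intro u hu
    by_contra h
    push_neg at h
    set F : Submodule ℝ V :=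
      { carrier := {v | ∀ g : G, ρ g v = v}
        add_mem' := by intro a b ha hb g; simp [map_add, ha g, hb g]
        zero_mem' := by intro g; simp
        smul_mem' := by intro c a ha g; simp [map_smul, ha g] } with hFdef
    have hinv : ∀ (g : G) (v : V), v ∈ F → ρ g v ∈ F := by
      intro g v hv
      have : ρ g v = v := hv g
      rw [this]; exact hv
    rcases hirr F hinv with hbot | htop
    · have : u ∈ F := h
      rw [hbot] at this
      exact hu this
    · obtain ⟨g, v, hgv⟩ := hnontrivial
      have : v ∈ F := by rw [htop]; trivial
      exact hgv (this g)
  -- Pick a nonzero element of W.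
  obtain ⟨w, hwW, hw0⟩ := (Submodule.ne_bot_iff W).mp hW
  obtain ⟨i, hi⟩ : ∃ i, w i ≠ 0 := by
    by_contra h
    push_neg at h
    exact hw0 (funext h)
  obtain ⟨g, hg⟩ := hfix (w i) hi
  -- u := g_i • w - w is supported at coordinate i and nonzero there.
  set u : Fin k → V := (fun j => ρ (if j = i then g else 1) (w j)) - w with hu
  have huW : u ∈ W := W.sub_mem (hWG _ _ hwW) hwW
  have husingle : u = Pi.single i (u i) := by
    funext j
    by_cases hji : j = i
    · subst hji; simp
    · simp [hu, hji, Pi.single_eq_of_ne hji]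
  have hui : u i ≠ 0 := by
    simp only [hu, Pi.sub_apply, if_pos rfl]
    intro hc
    exact hg (sub_eq_zero.mp hc)
  -- The set of v with single i v ∈ W is a G-invariant submodule of V, hence ⊤.
  set U : Submodule ℝ V := W.comap (LinearMap.single ℝ (fun _ : Fin k => V) i) with hUdef
  have hUmem : ∀ v : V, v ∈ U ↔ Pi.single i v ∈ W := fun v => Iff.rfl
  have hUinv : ∀ (g' : G) (v : V), v ∈ U → ρ g' v ∈ U := by
    intro g' v hv
    rw [hUmem] at hv ⊢
    have := hWG (fun j => if j = i then g' else 1) _ hv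
    convert this using 1
    funext j
    by_cases hji : j = i
    · subst hji; simp
    · simp [Pi.single_eq_of_ne hji, hji]
  have hUtop : U = ⊤ := by
    rcases hirr U hUinv with hbot | htop
    · exfalso
      have : u i ∈ U := by rw [hUmem, ← husingle]; exact huW
      rw [hbot] at this
      exact hui this
    · exact htop
  have hsingle_i : ∀ v : V, Pi.single i v ∈ W := by
    intro v
    have : v ∈ U := by rw [hUtop]; trivial
    exact this
  -- Permutations move the single coordinate anywhere.
  have hsingle : ∀ (j : Fin k) (v : V), Pi.single j v ∈ W := by
    intro j v
    have := hWS (Equiv.swap i j) _ (hsingle_i v)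
    convert this using 1
    funext l
    rw [Equiv.swap_inv]
    by_cases hlj : l = j
    · subst hlj; rw [Equiv.swap_apply_right]; simp
    · have hne : Equiv.swap i j l ≠ i := by
        intro hc
        apply hlj
        have := (Equiv.swap i j).injective (hc.trans (Equiv.swap_apply_right i j).symm)
        exact this
      rw [Pi.single_eq_of_ne hlj, Pi.single_eq_of_ne hne]
  -- Conclude W = ⊤.
  rw [eq_top_iff]
  intro v _
  have : v = ∑ j : Fin k, Pi.single j (v j) := by
    simp [Finset.univ_sum_single]
  rw [this]
  exact Submodule.sum_mem _ fun j _ => hsingle j (v j)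
end

section
/- Let G be a finite group acting linearly on a finite-dimensional real inner product space V with a G-invariant inner product (⟨g·u, g·v⟩ = ⟨u, v⟩ for all g, u, v). Let V_fixed = {v ∈ V : g·v = v for all g ∈ G} and let e_1,…,e_s be a basis of V_fixed. Let k ≥ 1. Then a linear map L : V^k → V^k is equivariant under both the componentwise G^k-action and the S_k coordinate-permutation action if and only if there exist a G-equivariant linear map L̂ : V → V and real numbers a_{ij} (1 ≤ i, j ≤ s) such that for every (v_1,…,v_k) ∈ V^k and every coordinate m, L(v_1,…,v_k)_m = L̂(v_m) + Σ_{i,j=1}^s a_{ij} · (Σ_{ℓ=1}^k ⟨v_ℓ, e_i⟩) · e_j. -/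
open scoped RealInnerProductSpace

/-! Writing `L v m = ∑ ℓ, L_{mℓ} (v ℓ)` in blocks, invariance under `S_k` forces all diagonal
blocks to be one map `A` and all off-diagonal blocks one map `B`, so
`L v m = (A - B) (v m) + B (∑ ℓ, v ℓ)`. Equivariance under `Gᵏ` makes `A` (hence `A - B`)
`G`-equivariant and `B` invariant on both sides: `B ∘ ρ g = B = ρ g ∘ B`. The second identity puts
the range of `B` in the fixed space; the first, after averaging over `G` (an orthogonal projection,
as `ρ` is unitary), makes `B` vanish on its orthogonal complement, i.e. where all `⟪·, e i⟫`
vanish. Such a `B` is a combination of the rank-one maps `w ↦ ⟪w, e i⟫ • e j`. -/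

theorem LinearMap.exists_eq_sum_smul_of_forall_eq_zero {𝕜 E F ι : Type*} [Field 𝕜]
    [AddCommGroup E] [Module 𝕜 E] [AddCommGroup F] [Module 𝕜 F] [Fintype ι]
    (L : ι → E →ₗ[𝕜] 𝕜) (C : E →ₗ[𝕜] F) (h : ∀ w, (∀ i, L i w = 0) → C w = 0) :
    ∃ u : ι → F, ∀ w, C w = ∑ i, L i w • u i := by
  classical
  -- `C` factors through `pi L` via a left inverse of the injection `E ⧸ ker (pi L) → (ι → 𝕜)`.
  set p := ker (pi L)
  have hp : p ≤ ker C := fun w hw => h w fun i => congrFun (mem_ker.1 hw) i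
  obtain ⟨R, hR⟩ := (p.liftQ (pi L) le_rfl).exists_leftInverse_of_injective
    (p.ker_liftQ_eq_bot _ _ le_rfl)
  set D := p.liftQ C hp ∘ₗ R
  have hD : ∀ w, D (pi L w) = C w := fun w => by
    have hRw : R (pi L w) = p.mkQ w := LinearMap.congr_fun hR (p.mkQ w)
    simp only [D, comp_apply, hRw, Submodule.mkQ_apply, Submodule.liftQ_apply]
  exact ⟨fun i => D fun j => if i = j then 1 else 0, fun w => by
    rw [← hD, pi_apply_eq_sum_univ]; rfl⟩

theorem Equiv.Perm.exists_apply_eq_and_apply_eq {ι : Type*} [DecidableEq ι] {m ℓ m' ℓ' : ι}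
    (h : m ≠ ℓ) (h' : m' ≠ ℓ') : ∃ τ : Equiv.Perm ι, τ m = m' ∧ τ ℓ = ℓ' := by
  set σ := Equiv.swap m m'
  have hσ : σ ℓ ≠ m' := fun hℓ =>
    h (σ.injective ((Equiv.swap_apply_left m m').trans hℓ.symm))
  refine ⟨Equiv.swap (σ ℓ) ℓ' * σ, ?_, Equiv.swap_apply_left _ _⟩
  rw [Equiv.Perm.mul_apply, Equiv.swap_apply_left, Equiv.swap_apply_of_ne_of_ne hσ.symm h']

section DiagonalInvariance

-- `x₀` is the common value when there are no (off-)diagonal entries at all.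
variable {ι X : Type*} (T : ι → ι → X) {P : X → Prop} {x₀ : X}

theorem exists_forall_diag_eq (hT : ∀ (τ : Equiv.Perm ι) m ℓ, T (τ m) (τ ℓ) = T m ℓ)
    (h₀ : P x₀) (hP : ∀ m, P (T m m)) :
    ∃ A, P A ∧ ∀ m, T m m = A := by
  classical
  rcases isEmpty_or_nonempty ι with _ | ⟨⟨m₀⟩⟩
  · exact ⟨x₀, h₀, isEmptyElim⟩
  · refine ⟨T m₀ m₀, hP m₀, fun m => ?_⟩
    simpa using hT (Equiv.swap m₀ m) m₀ m₀

theorem exists_forall_offDiag_eq (hT : ∀ (τ : Equiv.Perm ι) m ℓ, T (τ m) (τ ℓ) = T m ℓ)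
    (h₀ : P x₀) (hP : ∀ m ℓ, m ≠ ℓ → P (T m ℓ)) :
    ∃ B, P B ∧ ∀ m ℓ, m ≠ ℓ → T m ℓ = B := by
  classical
  by_cases h : ∃ m ℓ : ι, m ≠ ℓ
  · obtain ⟨m₀, ℓ₀, hm₀ℓ₀⟩ := h
    refine ⟨T m₀ ℓ₀, hP _ _ hm₀ℓ₀, fun m ℓ hmℓ => ?_⟩
    obtain ⟨τ, rfl, rfl⟩ := Equiv.Perm.exists_apply_eq_and_apply_eq hm₀ℓ₀ hmℓ
    exact hT τ m₀ ℓ₀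
  · push Not at h
    exact ⟨x₀, h₀, fun m ℓ hmℓ => (hmℓ (h m ℓ)).elim⟩

end DiagonalInvariance

namespace LinearMap

variable {R M ι : Type*} [CommRing R] [AddCommGroup M] [Module R M] [DecidableEq ι]

def block (L : (ι → M) →ₗ[R] (ι → M)) (m ℓ : ι) : M →ₗ[R] M :=
  proj m ∘ₗ L ∘ₗ single R (fun _ => M) ℓ

variable (L : (ι → M) →ₗ[R] (ι → M))

theorem block_apply (m ℓ : ι) (w : M) : L.block m ℓ w = L (Pi.single ℓ w) m := rfl

theorem apply_eq_sum_block [Fintype ι] (v : ι → M) (m : ι) :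
    L v m = ∑ ℓ, L.block m ℓ (v ℓ) := by
  conv_lhs => rw [← Finset.univ_sum_single v, map_sum, Finset.sum_apply]
  rfl

theorem sum_block_eq [Fintype ι] {A B : M →ₗ[R] M} (hdiag : ∀ m, L.block m m = A)
    (hoff : ∀ m ℓ, m ≠ ℓ → L.block m ℓ = B) (v : ι → M) (m : ι) :
    ∑ ℓ, L.block m ℓ (v ℓ) = (A - B) (v m) + B (∑ ℓ, v ℓ) := by
  have hterm : ∀ ℓ, L.block m ℓ (v ℓ) = B (v ℓ) + if ℓ = m then (A - B) (v ℓ) else 0 := by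
    intro ℓ
    by_cases h : ℓ = m
    · simp [h, hdiag]
    · simp [h, hoff m ℓ (Ne.symm h)]
  simp only [hterm, Finset.sum_add_distrib, Finset.sum_ite_eq', Finset.mem_univ, if_true,
    map_sum]
  abel

theorem block_perm (hperm : ∀ (τ : Equiv.Perm ι) (v : ι → M),
      L (fun i => v (τ⁻¹ i)) = fun i => L v (τ⁻¹ i))
    (τ : Equiv.Perm ι) (m ℓ : ι) : L.block (τ m) (τ ℓ) = L.block m ℓ := by
  ext w
  have hsingle : (fun i => (Pi.single ℓ w : ι → M) (τ⁻¹ i)) = Pi.single (τ ℓ) w :=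
    Pi.single_comp_equiv τ⁻¹ ℓ w
  have := congrFun (hperm τ (Pi.single ℓ w)) (τ m)
  rwa [hsingle, Equiv.Perm.coe_inv, Equiv.symm_apply_apply] at this

end LinearMap

namespace Representation

variable {R G M : Type*} [CommRing R] [Monoid G] [AddCommGroup M] [Module R M]
  (ρ : Representation R G M)

def IsWreathEquivariant {ι : Type*} (L : (ι → M) →ₗ[R] (ι → M)) : Prop :=
  (∀ (g : ι → G) (v : ι → M), L (fun i => ρ (g i) (v i)) = fun i => ρ (g i) (L v i)) ∧
    ∀ (τ : Equiv.Perm ι) (v : ι → M), L (fun i => v (τ⁻¹ i)) = fun i => L v (τ⁻¹ i)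

def IsBiInvariant (B : M →ₗ[R] M) : Prop :=
  (∀ g w, B (ρ g w) = B w) ∧ ∀ g w, ρ g (B w) = B w

variable {ρ}

theorem block_apply_rho {ι : Type*} [DecidableEq ι] {L : (ι → M) →ₗ[R] (ι → M)}
    (hG : ∀ (g : ι → G) (v : ι → M), L (fun i => ρ (g i) (v i)) = fun i => ρ (g i) (L v i))
    (g : ι → G) (m ℓ : ι) (w : M) : L.block m ℓ (ρ (g ℓ) w) = ρ (g m) (L.block m ℓ w) := by
  have hsingle : (fun i => ρ (g i) ((Pi.single ℓ w : ι → M) i)) = Pi.single ℓ (ρ (g ℓ) w) :=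
    funext (Pi.apply_single (fun i => ρ (g i)) (fun i => map_zero _) ℓ w)
  have := congrFun (hG g (Pi.single ℓ w)) m
  rwa [hsingle] at this

theorem isWreathEquivariant_iff {ι : Type*} [Fintype ι] (L : (ι → M) →ₗ[R] (ι → M)) :
    ρ.IsWreathEquivariant L ↔ ∃ A B : M →ₗ[R] M, (∀ g w, A (ρ g w) = ρ g (A w)) ∧
      ρ.IsBiInvariant B ∧ ∀ v m, L v m = A (v m) + B (∑ ℓ, v ℓ) := by
  classical
  constructor
  · rintro ⟨hG, hperm⟩
    obtain ⟨D, hD, hdiag⟩ := exists_forall_diag_eq L.block (L.block_perm hperm)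
      (P := fun A => ∀ g w, A (ρ g w) = ρ g (A w)) (x₀ := 0) (by simp)
      fun m g w => block_apply_rho hG (fun _ => g) m m w
    obtain ⟨B, hB, hoff⟩ := exists_forall_offDiag_eq L.block (L.block_perm hperm)
      (P := ρ.IsBiInvariant) (x₀ := 0) (by simp [IsBiInvariant])
      fun m ℓ hmℓ =>
        ⟨fun g w => by simpa [hmℓ] using block_apply_rho hG (Pi.mulSingle ℓ g) m ℓ w,
          fun g w => by simpa [hmℓ] using (block_apply_rho hG (Pi.mulSingle m g) m ℓ w).symm⟩
    refine ⟨D - B, B, fun g w => by simp [hD, hB.1, hB.2], hB, fun v m => ?_⟩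
    rw [L.apply_eq_sum_block, L.sum_block_eq hdiag hoff]
  · rintro ⟨A, B, hA, ⟨hB₁, hB₂⟩, hL⟩
    refine ⟨fun g v => funext fun m => ?_, fun τ v => funext fun m => ?_⟩
    · simp [hL, hA, hB₁, hB₂, map_sum]
    · simp only [hL, Equiv.sum_comp τ⁻¹ v]

end Representation

theorem Representation.map_averageMap {k G V W : Type*} [CommRing k] [Group G] [Fintype G]
    [Invertible (Fintype.card G : k)] [AddCommGroup V] [Module k V] [AddCommGroup W]
    [Module k W]
    (ρ : Representation k G V) (B : V →ₗ[k] W) (hB : ∀ g w, B (ρ g w) = B w) (w : V) :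
    B (ρ.averageMap w) = B w := by
  simp [GroupAlgebra.average, map_sum, hB, ← Nat.cast_smul_eq_nsmul k, smul_smul]

theorem Representation.apply_eq_zero_of_forall_inner_invariants {G V W : Type*} [Group G]
    [Finite G] [NormedAddCommGroup V] [InnerProductSpace ℝ V] [AddCommGroup W] [Module ℝ W]
    {ρ : Representation ℝ G V} (hinner : ∀ (g : G) (u v : V), ⟪ρ g u, ρ g v⟫ = ⟪u, v⟫)
    {B : V →ₗ[ℝ] W} (hB : ∀ g w, B (ρ g w) = B w) {w : V}
    (hw : ∀ u ∈ ρ.invariants, ⟪w, u⟫ = 0) : B w = 0 := by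
  have := Fintype.ofFinite G
  have : Invertible (Fintype.card G : ℝ) := invertibleOfNonzero (by simp)
  have hw₀ := ρ.averageMap_invariant w
  have hinner_w₀ : ∀ g u, ⟪ρ g u, ρ.averageMap w⟫ = ⟪u, ρ.averageMap w⟫ := fun g u => by
    conv_lhs => rw [← (ρ.mem_invariants _).1 hw₀ g]
    exact hinner g u _
  have hw₀_zero : ρ.averageMap w = 0 := inner_self_eq_zero.1
    ((ρ.map_averageMap ((innerₗ V).flip _) hinner_w₀ w).trans (hw _ hw₀))
  rw [← ρ.map_averageMap B hB, hw₀_zero, map_zero]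

section RankOne

variable {V ι : Type*} [NormedAddCommGroup V] [InnerProductSpace ℝ V] [Fintype ι]

noncomputable def rankOneCombination (e : ι → V) (a : ι → ι → ℝ) : V →ₗ[ℝ] V :=
  ∑ i, ∑ j, a i j • ((innerₗ V).flip (e i)).smulRight (e j)

theorem rankOneCombination_apply (e : ι → V) (a : ι → ι → ℝ) (w : V) :
    rankOneCombination e a w = ∑ i, ∑ j, a i j • (⟪w, e i⟫ • e j) := by
  simp [rankOneCombination, real_inner_comm]

theorem exists_eq_rankOneCombination (e : ι → V) (C : V →ₗ[ℝ] V)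
    (hker : ∀ w, (∀ i, ⟪w, e i⟫ = 0) → C w = 0)
    (hrange : ∀ w, C w ∈ Submodule.span ℝ (Set.range e)) :
    ∃ a, C = rankOneCombination e a := by
  obtain ⟨u, hu⟩ := (C.codRestrict _ hrange).exists_eq_sum_smul_of_forall_eq_zero
    (fun i => (innerₗ V).flip (e i)) fun w hw => Subtype.ext (hker w hw)
  choose a ha using fun i => (Submodule.mem_span_range_iff_exists_fun ℝ).1 (u i).2
  refine ⟨a, LinearMap.ext fun w => ?_⟩
  have hCw : C w = ∑ i, ⟪w, e i⟫ • (u i : V) := by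
    simpa [real_inner_comm] using congrArg Subtype.val (hu w)
  simp only [hCw, rankOneCombination_apply, ← ha, Finset.smul_sum, smul_comm (⟪w, _⟫ : ℝ)]

end RankOne

theorem Representation.isBiInvariant_iff_exists_rankOneCombination {G V ι : Type*} [Group G]
    [Finite G] [NormedAddCommGroup V] [InnerProductSpace ℝ V] [Fintype ι]
    {ρ : Representation ℝ G V} (hinner : ∀ (g : G) (u v : V), ⟪ρ g u, ρ g v⟫ = ⟪u, v⟫)
    {e : ι → V} (he_span : Submodule.span ℝ (Set.range e) = ρ.invariants) (B : V →ₗ[ℝ] V) :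
    ρ.IsBiInvariant B ↔ ∃ a, B = rankOneCombination e a := by
  have he_fix : ∀ g i, ρ g (e i) = e i := fun g i =>
    (ρ.mem_invariants _).1 (he_span ▸ Submodule.subset_span (Set.mem_range_self i)) g
  constructor
  · rintro ⟨hB₁, hB₂⟩
    refine exists_eq_rankOneCombination e B (fun w hw => ?_) fun w => ?_
    · refine ρ.apply_eq_zero_of_forall_inner_invariants hinner hB₁ fun u hu => ?_
      rw [← he_span] at hu
      exact (Submodule.span_le (p := LinearMap.ker (innerₗ V w))).2
        (Set.range_subset_iff.2 hw) hu
    · rw [he_span, ρ.mem_invariants]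
      exact fun g => hB₂ g w
  · rintro ⟨a, rfl⟩
    have he_inner : ∀ g w i, ⟪ρ g w, e i⟫ = ⟪w, e i⟫ := fun g w i => by
      rw [← hinner g w (e i), he_fix]
    exact ⟨fun g w => by simp only [rankOneCombination_apply, he_inner],
      fun g w => by simp [rankOneCombination_apply, map_sum, he_fix]⟩

theorem wreath_equivariant_characterization_general
    {G V : Type*} [Group G] [Finite G]
    [NormedAddCommGroup V] [InnerProductSpace ℝ V]
    (ρ : Representation ℝ G V)
    (hinner : ∀ (g : G) (u v : V), ⟪ρ g u, ρ g v⟫ = ⟪u, v⟫)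
    (s : ℕ) (e : Fin s → V)
    (he_span : Submodule.span ℝ (Set.range e) = ρ.invariants)
    (k : ℕ)
    (L : (Fin k → V) →ₗ[ℝ] (Fin k → V)) :
    ((∀ (g : Fin k → G) (v : Fin k → V),
        L (fun i => ρ (g i) (v i)) = fun i => ρ (g i) (L v i)) ∧
     (∀ (τ : Equiv.Perm (Fin k)) (v : Fin k → V),
        L (fun i => v (τ⁻¹ i)) = fun i => L v (τ⁻¹ i))) ↔
    (∃ (Lhat : V →ₗ[ℝ] V) (a : Fin s → Fin s → ℝ),
      (∀ (g : G) (v : V), Lhat (ρ g v) = ρ g (Lhat v)) ∧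
      ∀ (v : Fin k → V) (m : Fin k),
        L v m = Lhat (v m) + ∑ i, ∑ j, a i j • ((∑ ℓ, ⟪v ℓ, e i⟫) • e j)) := by
  have hB := ρ.isBiInvariant_iff_exists_rankOneCombination hinner he_span
  have hsum : ∀ a (v : Fin k → V), rankOneCombination e a (∑ ℓ, v ℓ) =
      ∑ i, ∑ j, a i j • ((∑ ℓ, ⟪v ℓ, e i⟫) • e j) := fun a v => by
    simp only [rankOneCombination_apply, sum_inner]
  refine (ρ.isWreathEquivariant_iff L).trans ⟨?_, ?_⟩
  · rintro ⟨A, B, hA, hBinv, hL⟩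
    obtain ⟨a, rfl⟩ := (hB B).1 hBinv
    exact ⟨A, a, hA, fun v m => by rw [hL, hsum]⟩
  · rintro ⟨Lhat, a, hLhat, hL⟩
    exact ⟨Lhat, rankOneCombination e a, hLhat, (hB _).2 ⟨a, rfl⟩, fun v m => by rw [hL, hsum]⟩

/-- Characterization of the wreath-equivariant linear layers
on `Vᵏ`: a linear map `L : Vᵏ → Vᵏ` commutes with the componentwise `Gᵏ`-action
and coordinate permutations iff it is a Siamese map `L̂` plus a combination of
the `s²` non-Siamese maps built from a basis `e₁, …, e_s` of the fixed space. -/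
theorem wreath_equivariant_characterization
    {G V : Type*} [Group G] [Finite G]
    [NormedAddCommGroup V] [InnerProductSpace ℝ V] [FiniteDimensional ℝ V]
    (ρ : Representation ℝ G V)
    (hinner : ∀ (g : G) (u v : V), ⟪ρ g u, ρ g v⟫ = ⟪u, v⟫)
    (s : ℕ) (e : Fin s → V)
    (he_indep : LinearIndependent ℝ e)
    (he_span : Submodule.span ℝ (Set.range e) = ρ.invariants)
    (k : ℕ) (hk : 1 ≤ k)
    (L : (Fin k → V) →ₗ[ℝ] (Fin k → V)) :
    ((∀ (g : Fin k → G) (v : Fin k → V),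
        L (fun i => ρ (g i) (v i)) = fun i => ρ (g i) (L v i)) ∧
     (∀ (τ : Equiv.Perm (Fin k)) (v : Fin k → V),
        L (fun i => v (τ⁻¹ i)) = fun i => L v (τ⁻¹ i))) ↔
    (∃ (Lhat : V →ₗ[ℝ] V) (a : Fin s → Fin s → ℝ),
      (∀ (g : G) (v : V), Lhat (ρ g v) = ρ g (Lhat v)) ∧
      ∀ (v : Fin k → V) (m : Fin k),
        L v m = Lhat (v m) + ∑ i, ∑ j, a i j • ((∑ ℓ, ⟪v ℓ, e i⟫) • e j)) :=
  wreath_equivariant_characterization_general ρ hinner s e he_span k L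
end

section
/- Let G be a finite group acting linearly on a finite-dimensional real vector space V that has no nonzero G-fixed vectors (g·v = v for all g ∈ G implies v = 0). Let k ≥ 1. Then every linear map L : V^k → V^k that is equivariant under both the componentwise G^k-action and the S_k coordinate-permutation action is Siamese: there exists a G-equivariant linear map L̂ : V → V such that L(v_1,…,v_k) = (L̂(v_1),…,L̂(v_k)) for all (v_1,…,v_k) ∈ V^k. -/
/-- If a finite group `G` acts linearly on a
finite-dimensional real vector space `V` with no nonzero fixed vectors, then
every wreath-equivariant linear map `L : Vᵏ → Vᵏ` is Siamese. -/
theorem wreath_equivariant_is_siamese_of_no_fixed_vectors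
    {G V : Type*} [Group G] [Finite G] [AddCommGroup V] [Module ℝ V]
    [FiniteDimensional ℝ V]
    (ρ : Representation ℝ G V)
    (hfix : ∀ v : V, (∀ g : G, ρ g v = v) → v = 0)
    (k : ℕ) (hk : 1 ≤ k)
    (L : (Fin k → V) →ₗ[ℝ] (Fin k → V))
    (hLG : ∀ (g : Fin k → G) (v : Fin k → V),
      L (fun i => ρ (g i) (v i)) = fun i => ρ (g i) (L v i))
    (hLS : ∀ (τ : Equiv.Perm (Fin k)) (v : Fin k → V),
      L (fun i => v (τ⁻¹ i)) = fun i => L v (τ⁻¹ i)) :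
    ∃ Lhat : V →ₗ[ℝ] V,
      (∀ (g : G) (v : V), Lhat (ρ g v) = ρ g (Lhat v)) ∧
      ∀ (v : Fin k → V) (m : Fin k), L v m = Lhat (v m) := by
  have z : Fin k := ⟨0, hk⟩
  -- key consequence of G-equivariance on single-supported vectors
  have key : ∀ (g : Fin k → G) (j m : Fin k) (v : V),
      L (Pi.single j (ρ (g j) v)) m = ρ (g m) (L (Pi.single j v) m) := by
    intro g j m v
    have h1 : (fun i => ρ (g i) ((Pi.single j v : Fin k → V) i))
        = (Pi.single j (ρ (g j) v) : Fin k → V) := by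
      funext i
      by_cases hij : i = j
      · subst hij; simp
      · simp [Pi.single_eq_of_ne hij]
    have h2 := congrFun (hLG g (Pi.single j v)) m
    rw [h1] at h2
    exact h2
  -- off-diagonal entries vanish
  have offdiag : ∀ (j m : Fin k), m ≠ j → ∀ v : V, L (Pi.single j v) m = 0 := by
    intro j m hmj v
    apply hfix
    intro h
    have h3 := key (fun i => if i = m then h else 1) j m v
    simp only [if_neg (fun hh : j = m => hmj hh.symm), if_pos rfl, map_one,
      Module.End.one_apply] at h3
    exact h3.symm
  -- diagonal entries are all equal to the one at z
  have diag_eq : ∀ (m : Fin k) (v : V),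
      L (Pi.single m v) m = L (Pi.single z v) z := by
    intro m v
    have h1 : (fun i => (Pi.single z v : Fin k → V) ((Equiv.swap m z)⁻¹ i))
        = (Pi.single m v : Fin k → V) := by
      funext i
      by_cases hi : i = m
      · subst hi; rw [Equiv.swap_inv, Equiv.swap_apply_left, Pi.single_eq_same, Pi.single_eq_same]
      · rw [Pi.single_eq_of_ne hi, Equiv.swap_inv]
        have hne : Equiv.swap m z i ≠ z := by
          intro hc
          exact hi ((Equiv.swap m z).injective (by rw [hc, Equiv.swap_apply_left]))
        simp [Pi.single_eq_of_ne hne]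
    have h2 := congrFun (hLS (Equiv.swap m z) (Pi.single z v)) m
    rw [h1] at h2
    rw [h2, Equiv.swap_inv, Equiv.swap_apply_left]
  -- define Lhat
  set Lhat : V →ₗ[ℝ] V :=
    (LinearMap.proj z).comp (L.comp (LinearMap.single ℝ (fun _ : Fin k => V) z)) with hLhat
  have hLhatv : ∀ v : V, Lhat v = L (Pi.single z v) z := fun v => rfl
  refine ⟨Lhat, ?_, ?_⟩
  · intro g v
    rw [hLhatv, hLhatv]
    have h3 := key (fun _ => g) z z v
    simpa using h3
  · intro v m
    have hv : v = ∑ j, Pi.single j (v j) := by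
      rw [Finset.univ_sum_single]
    have hsum : L v m = ∑ j, L (Pi.single j (v j)) m := by
      conv_lhs => rw [hv]
      rw [map_sum]
      simp
    rw [hsum, Finset.sum_eq_single m]
    · rw [diag_eq, hLhatv]
    · intro j _ hj
      exact offdiag j m (fun h => hj h.symm) (v j)
    · intro h; exact absurd (Finset.mem_univ m) h
end

section
/- Let G be a finite group acting linearly on a finite-dimensional real vector space V, and let k ≥ 2. Then the dimension of the real vector space of linear maps L : V^k → V^k that are equivariant under both the componentwise G^k-action and the S_k coordinate-permutation action equals D + s², where D is the dimension of the space of G-equivariant linear maps V → V and s = dim{v ∈ V : g·v = v for all g ∈ G}. -/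
/-!
View an endomorphism `L` of `Vᵏ` as a `k × k` matrix of blocks `L i j : V → V`. Relabelling
coordinates by `τ ∈ S_k` sends the block `(i, j)` to `(τ i, τ j)`, and `S_k` is transitive on the
diagonal and, for `k ≥ 2`, on ordered pairs of distinct indices; so a wreath-equivariant `L` has a
single diagonal block `A` and a single off-diagonal block `B`. Acting by independent group elements
in different coordinates shows that `A` is `G`-equivariant while `B (g • v) = h • B v` for all
`g, h`. Such a `B` takes values in `V^G` and is constant on orbits, hence `B = B|_{V^G} ∘ π` for the
averaging projection `π` onto `V^G`; these `B` therefore form a copy of `End (V^G)`, of dimension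
`s²`.
-/

namespace WreathDimCount

variable {G V : Type*} [Group G] [AddCommGroup V] [Module ℝ V]

/-- The space of `G`-equivariant linear endomorphisms of `V`. -/
def GEquivMaps (ρ : Representation ℝ G V) : Submodule ℝ (V →ₗ[ℝ] V) where
  carrier := {T | ∀ (g : G) (v : V), T (ρ g v) = ρ g (T v)}
  zero_mem' := by intro g v; simp
  add_mem' := by
    intro T T' hT hT' g v
    simp [LinearMap.add_apply, hT g v, hT' g v]
  smul_mem' := by
    intro c T hT g v
    simp [LinearMap.smul_apply, hT g v]

/-- The space of wreath-equivariant linear endomorphisms of `Vᵏ`, i.e. those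
commuting with the componentwise `Gᵏ`-action and with coordinate permutations. -/
def WreathEquivMaps (ρ : Representation ℝ G V) (k : ℕ) :
    Submodule ℝ ((Fin k → V) →ₗ[ℝ] (Fin k → V)) where
  carrier := {L |
    (∀ (g : Fin k → G) (v : Fin k → V),
      L (fun i => ρ (g i) (v i)) = fun i => ρ (g i) (L v i)) ∧
    (∀ (τ : Equiv.Perm (Fin k)) (v : Fin k → V),
      L (fun i => v (τ⁻¹ i)) = fun i => L v (τ⁻¹ i))}
  zero_mem' := by
    constructor
    · intro g v; funext m; simp
    · intro τ v; funext m; simp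
  add_mem' := by
    rintro L L' ⟨hL1, hL2⟩ ⟨hL'1, hL'2⟩
    constructor
    · intro g v
      funext m
      simp [LinearMap.add_apply, hL1 g v, hL'1 g v]
    · intro τ v
      funext m
      simp only [LinearMap.add_apply, Pi.add_apply, hL2 τ v, hL'2 τ v]
  smul_mem' := by
    rintro c L ⟨hL1, hL2⟩
    constructor
    · intro g v
      funext m
      simp [LinearMap.smul_apply, hL1 g v]
    · intro τ v
      funext m
      simp only [LinearMap.smul_apply, Pi.smul_apply, hL2 τ v]


def BiinvariantMaps (ρ : Representation ℝ G V) : Submodule ℝ (V →ₗ[ℝ] V) where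
  carrier := {B | ∀ (g h : G) (v : V), B (ρ g v) = ρ h (B v)}
  zero_mem' := by intro g h v; simp
  add_mem' := by intro B B' hB hB' g h v; simp [hB g h v, hB' g h v]
  smul_mem' := by intro c B hB g h v; simp [hB g h v]

section Biinvariant

variable {ρ : Representation ℝ G V} {B : V →ₗ[ℝ] V}

theorem apply_rho_of_mem_biinvariantMaps (hB : B ∈ BiinvariantMaps ρ) (g : G) (v : V) :
    B (ρ g v) = B v := by
  simpa using hB g 1 v

theorem rho_apply_of_mem_biinvariantMaps (hB : B ∈ BiinvariantMaps ρ) (g : G) (v : V) :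
    ρ g (B v) = B v := by
  simpa using (hB 1 g v).symm

variable [Fintype G] [Invertible (Fintype.card G : ℝ)]

theorem averageMap_rho (g : G) (v : V) : ρ.averageMap (ρ g v) = ρ.averageMap v := by
  rw [Representation.averageMap, ← Representation.asAlgebraHom_single_one, ← Module.End.mul_apply,
    ← map_mul, GroupAlgebra.mul_average_right]

theorem apply_averageMap_of_mem_biinvariantMaps (hB : B ∈ BiinvariantMaps ρ) (v : V) :
    B (ρ.averageMap v) = B v := by
  simp only [Representation.averageMap, GroupAlgebra.average, map_smul, map_sum,
    Representation.asAlgebraHom_of, LinearMap.smul_apply, LinearMap.sum_apply,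
    apply_rho_of_mem_biinvariantMaps hB, Finset.sum_const, Finset.card_univ]
  rw [← Nat.cast_smul_eq_nsmul ℝ, smul_smul, invOf_mul_self, one_smul]

variable (ρ)

noncomputable def biinvariantMapsEquiv : BiinvariantMaps ρ ≃ₗ[ℝ] Module.End ℝ ρ.invariants where
  toFun B := ((B : V →ₗ[ℝ] V) ∘ₗ ρ.invariants.subtype).codRestrict ρ.invariants
    fun w g => rho_apply_of_mem_biinvariantMaps B.2 g w
  map_add' _ _ := rfl
  map_smul' _ _ := rfl
  invFun T := ⟨ρ.invariants.subtype ∘ₗ T ∘ₗ ρ.isProj_averageMap.codRestrict, fun g h v => by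
    have hπ : ρ.isProj_averageMap.codRestrict (ρ g v) = ρ.isProj_averageMap.codRestrict v :=
      Subtype.ext (averageMap_rho g v)
    simp only [LinearMap.comp_apply, hπ]
    exact ((T _).2 h).symm⟩
  left_inv B := by
    ext v
    exact apply_averageMap_of_mem_biinvariantMaps B.2 v
  right_inv T := by
    ext w
    simp [LinearMap.IsProj.codRestrict_apply_cod]

end Biinvariant

theorem exists_perm_apply_eq_and_apply_eq {α : Type*} [DecidableEq α] {a b c d : α}
    (hab : a ≠ b) (hcd : c ≠ d) : ∃ τ : Equiv.Perm α, τ a = c ∧ τ b = d := by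
  have hb : Equiv.swap a c b ≠ c := by
    rw [Ne, Equiv.swap_apply_eq_iff, Equiv.swap_apply_right]
    exact hab.symm
  refine ⟨Equiv.swap (Equiv.swap a c b) d * Equiv.swap a c, ?_, ?_⟩
  · simp [Equiv.swap_apply_of_ne_of_ne hb.symm hcd]
  · simp

section Wreath

variable {ρ : Representation ℝ G V} {k : ℕ}

def block (L : (Fin k → V) →ₗ[ℝ] (Fin k → V)) (i j : Fin k) : V →ₗ[ℝ] V :=
  LinearMap.proj i ∘ₗ L ∘ₗ LinearMap.single ℝ (fun _ => V) j

theorem block_apply (L : (Fin k → V) →ₗ[ℝ] (Fin k → V)) (i j : Fin k) (w : V) :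
    block L i j w = L (Pi.single j w) i :=
  rfl

def wreathMap (A B : V →ₗ[ℝ] V) : (Fin k → V) →ₗ[ℝ] (Fin k → V) :=
  LinearMap.pi fun i => (A - B) ∘ₗ LinearMap.proj i + ∑ j, B ∘ₗ LinearMap.proj j

theorem wreathMap_apply (A B : V →ₗ[ℝ] V) (v : Fin k → V) (i : Fin k) :
    wreathMap A B v i = A (v i) - B (v i) + ∑ j, B (v j) := by
  simp [wreathMap]

theorem block_wreathMap (A B : V →ₗ[ℝ] V) (i j : Fin k) :
    block (wreathMap A B) i j = if i = j then A else B := by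
  ext w
  rw [block_apply, wreathMap_apply, Finset.sum_eq_single j (fun m _ hm => by simp [hm])
    (by simp)]
  split_ifs with hij
  · subst hij; simp
  · simp [hij]

theorem wreathMap_mem_wreathEquivMaps {A B : V →ₗ[ℝ] V} (hA : A ∈ GEquivMaps ρ)
    (hB : B ∈ BiinvariantMaps ρ) : wreathMap A B ∈ WreathEquivMaps ρ k := by
  refine ⟨fun g v => funext fun m => ?_, fun τ v => funext fun m => ?_⟩
  · simp only [wreathMap_apply, hA (g m) (v m), map_add, map_sub, map_sum,
      apply_rho_of_mem_biinvariantMaps hB, rho_apply_of_mem_biinvariantMaps hB]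
  · simp only [wreathMap_apply]
    congr 1
    exact Equiv.sum_comp τ⁻¹ fun j => B (v j)

variable {L : (Fin k → V) →ₗ[ℝ] (Fin k → V)}

theorem block_perm (hL : L ∈ WreathEquivMaps ρ k) (τ : Equiv.Perm (Fin k)) (i j : Fin k) :
    block L (τ i) (τ j) = block L i j := by
  ext w
  have hv : (fun m => (Pi.single j w : Fin k → V) (τ⁻¹ m)) = Pi.single (τ j) w := by
    ext m
    simp [Pi.single_apply, Equiv.symm_apply_eq]
  have h := congrFun (hL.2 τ (Pi.single j w)) (τ i)
  rw [hv] at h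
  simpa [block_apply] using h

theorem block_self_eq (hL : L ∈ WreathEquivMaps ρ k) (i j : Fin k) :
    block L i i = block L j j := by
  simpa using (block_perm hL (Equiv.swap i j) i i).symm

theorem block_eq_of_ne (hL : L ∈ WreathEquivMaps ρ k) {i j i' j' : Fin k} (hij : i ≠ j)
    (hij' : i' ≠ j') : block L i j = block L i' j' := by
  obtain ⟨τ, hi, hj⟩ := exists_perm_apply_eq_and_apply_eq hij hij'
  rw [← hi, ← hj, block_perm hL]

theorem block_rho (hL : L ∈ WreathEquivMaps ρ k) (g : Fin k → G) (i j : Fin k) (v : V) :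
    block L i j (ρ (g j) v) = ρ (g i) (block L i j v) := by
  have hv : (fun m => ρ (g m) ((Pi.single j v : Fin k → V) m)) = Pi.single j (ρ (g j) v) := by
    ext m
    exact Pi.apply_single (fun m => ρ (g m)) (fun _ => map_zero _) j v m
  simpa [block_apply, hv] using congrFun (hL.1 g (Pi.single j v)) i

theorem block_self_mem_gEquivMaps (hL : L ∈ WreathEquivMaps ρ k) (i : Fin k) :
    block L i i ∈ GEquivMaps ρ :=
  fun g => block_rho hL (fun _ => g) i i

theorem block_mem_biinvariantMaps (hL : L ∈ WreathEquivMaps ρ k) {i j : Fin k} (hij : i ≠ j) :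
    block L i j ∈ BiinvariantMaps ρ := fun g h v => by
  simpa [hij] using block_rho hL (Function.update (fun _ => h) j g) i j v

theorem wreathMap_block (hL : L ∈ WreathEquivMaps ρ k) {i j : Fin k} (hij : i ≠ j) :
    wreathMap (block L i i) (block L i j) = L := by
  refine LinearMap.pi_ext fun m w => funext fun n => ?_
  rw [← block_apply, ← block_apply, block_wreathMap]
  split_ifs with hnm
  · rw [hnm, block_self_eq hL]
  · rw [block_eq_of_ne hL hij hnm]

variable (ρ) in
noncomputable def wreathEquivMapsEquiv {i j : Fin k} (hij : i ≠ j) :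
    WreathEquivMaps ρ k ≃ₗ[ℝ] GEquivMaps ρ × BiinvariantMaps ρ where
  toFun L := (⟨block L i i, block_self_mem_gEquivMaps L.2 i⟩,
    ⟨block L i j, block_mem_biinvariantMaps L.2 hij⟩)
  map_add' _ _ := rfl
  map_smul' _ _ := rfl
  invFun p := ⟨wreathMap p.1 p.2, wreathMap_mem_wreathEquivMaps p.1.2 p.2.2⟩
  left_inv L := by
    apply Subtype.ext
    exact wreathMap_block L.2 hij
  right_inv p := by
    ext : 2 <;> simp [block_wreathMap, hij]

end Wreath

/-- For a finite group `G` acting linearly on a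
finite-dimensional real vector space `V` and `k ≥ 2`, the dimension of the
space of wreath-equivariant linear endomorphisms of `Vᵏ` equals
`D + s²`, where `D` is the dimension of the space of `G`-equivariant
endomorphisms of `V` and `s` is the dimension of the fixed subspace. -/
theorem finrank_wreathEquivMaps [Finite G] [FiniteDimensional ℝ V]
    (ρ : Representation ℝ G V) (k : ℕ) (hk : 2 ≤ k) :
    Module.finrank ℝ (WreathEquivMaps ρ k) =
      Module.finrank ℝ (GEquivMaps ρ) +
        (Module.finrank ℝ ρ.invariants) ^ 2 := by
  have := Fintype.ofFinite G
  have : Invertible (Fintype.card G : ℝ) := invertibleOfNonzero (by simp)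
  have := Fin.nontrivial_iff_two_le.2 hk
  obtain ⟨i, j, hij⟩ := exists_pair_ne (Fin k)
  rw [(wreathEquivMapsEquiv ρ hij).finrank_eq, Module.finrank_prod,
    (biinvariantMapsEquiv ρ).finrank_eq, Module.finrank_linearMap, sq]

end WreathDimCount
end

section
/- Let G be a finite group acting linearly on a finite-dimensional real inner product space V with a G-invariant inner product, let V_fixed = {v ∈ V : g·v = v for all g ∈ G}, and let e_1,…,e_s be a basis of V_fixed. Let k ≥ 1 and let H be a subgroup of S_k whose action on {1,…,k} is transitive. Suppose T_1,…,T_h is a basis of the real vector space of H-equivariant linear maps ℝ^k → ℝ^k, with T_h equal to the identity map. Then a linear map L : V^k → V^k is equivariant under both the componentwise G^k-action and the coordinate-permutation action of H if and only if there exist a G-equivariant linear map L̂ : V → V and real numbers a_{ijℓ} (1 ≤ i, j ≤ s, 1 ≤ ℓ ≤ h − 1) such that for every (v_1,…,v_k) ∈ V^k and every coordinate m, L(v_1,…,v_k)_m = L̂(v_m) + Σ_{ℓ=1}^{h−1} Σ_{i,j=1}^s a_{ijℓ} · (T_ℓ(⟨v_1, e_i⟩, …, ⟨v_k, e_i⟩))_m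 · e_j. -/
open scoped RealInnerProductSpace

/-!
Write `L` in `k × k` blocks `block L m p : V →ₗ[ℝ] V`. Letting `G` act only in coordinate `m`
(resp. `p`) shows that the diagonal blocks are `G`-equivariant, while an off-diagonal block is
`G`-invariant on its input and takes values in `V_fixed`. Averaging over `G`, such a block depends on `w` only
through the coordinates `⟪w, e i⟫`, so it is a combination of the maps `w ↦ ⟪w, e i⟫ • e j`.
The `H`-action permutes blocks by `(m, p) ↦ (τ m, τ p)`: by transitivity all diagonal blocks
coincide, and the coefficient matrices of the off-diagonal part are `H`-equivariant, hence
combinations of the `T ℓ`. The component along `T_h = id` only involves `v m` and is absorbed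
into `L̂`.
-/

namespace WreathH

/-- The space of `H`-equivariant linear endomorphisms of `ℝᵏ`, for a subgroup
`H ≤ S_k` acting by permuting coordinates. -/
noncomputable def HEquivMaps (k : ℕ) (H : Subgroup (Equiv.Perm (Fin k))) :
    Submodule ℝ ((Fin k → ℝ) →ₗ[ℝ] (Fin k → ℝ)) where
  carrier := {T | ∀ τ ∈ H, ∀ x : Fin k → ℝ,
    T (fun i => x (τ⁻¹ i)) = fun i => T x (τ⁻¹ i)}
  zero_mem' := by
    intro τ hτ x
    funext m; simp
  add_mem' := by
    intro T T' hT hT' τ hτ x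
    funext m
    simp only [LinearMap.add_apply, Pi.add_apply, hT τ hτ x, hT' τ hτ x]
  smul_mem' := by
    intro c T hT τ hτ x
    funext m
    simp only [LinearMap.smul_apply, Pi.smul_apply, hT τ hτ x]

theorem mulVecLin_mem_HEquivMaps {k : ℕ} {H : Subgroup (Equiv.Perm (Fin k))}
    (M : Matrix (Fin k) (Fin k) ℝ) (hM : ∀ τ ∈ H, ∀ m q, M (τ⁻¹ m) q = M m (τ q)) :
    M.mulVecLin ∈ HEquivMaps k H := by
  intro τ hτ x
  funext m
  simp only [Matrix.mulVecLin_apply, Matrix.mulVec, dotProduct]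
  rw [← Equiv.sum_comp τ]
  exact Finset.sum_congr rfl fun q _ => by simp [← hM τ hτ, Equiv.Perm.inv_def]

theorem Fin.sum_eq_sum_filter_lt_add_last {M : Type*} [AddCommMonoid M] {h : ℕ} (hh : 1 ≤ h)
    (f : Fin h → M) :
    ∑ ℓ, f ℓ = ∑ ℓ ∈ Finset.univ.filter (fun ℓ : Fin h => (ℓ : ℕ) < h - 1), f ℓ +
      f ⟨h - 1, Nat.sub_lt hh Nat.one_pos⟩ := by
  rw [← Finset.sum_filter_add_sum_filter_not Finset.univ (fun ℓ : Fin h => (ℓ : ℕ) < h - 1)]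
  congr 1
  convert Finset.sum_singleton f _
  ext ℓ
  simp [Fin.ext_iff]
  omega

section Blocks

variable {ι R G V : Type*} [DecidableEq ι] [CommRing R] [AddCommGroup V] [Module R V]
  (L : (ι → V) →ₗ[R] (ι → V))

def block (m p : ι) : V →ₗ[R] V :=
  LinearMap.proj m ∘ₗ L ∘ₗ LinearMap.single R (fun _ => V) p

@[simp]
theorem block_apply (m p : ι) (w : V) : block L m p w = L (Pi.single p w) m := rfl

theorem apply_eq_sum_block [Fintype ι] (v : ι → V) (m : ι) : L v m = ∑ p, block L m p (v p) := by
  conv_lhs => rw [← Finset.univ_sum_single v, map_sum]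
  simp [Finset.sum_apply]

theorem block_perm (τ : Equiv.Perm ι)
    (hτ : ∀ v : ι → V, L (fun i => v (τ⁻¹ i)) = fun i => L v (τ⁻¹ i)) (m q : ι) :
    block L m (τ q) = block L (τ⁻¹ m) q := by
  ext w
  have hsingle : (fun i => (Pi.single q w : ι → V) (τ⁻¹ i)) = (Pi.single (τ q) w : ι → V) := by
    funext i
    simp [Pi.single_apply, Equiv.symm_apply_eq]
  have := congr_fun (hτ (Pi.single q w)) m
  rwa [hsingle] at this

def offDiagBlock (m p : ι) : V →ₗ[R] V := if m = p then 0 else block L m p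

theorem apply_eq_block_add_sum_offDiagBlock [Fintype ι] (v : ι → V) (m : ι) :
    L v m = block L m m (v m) + ∑ p, offDiagBlock L m p (v p) := by
  have hsplit : ∀ p, block L m p (v p) =
      (if m = p then block L m p (v p) else 0) + offDiagBlock L m p (v p) := fun p => by
    by_cases hmp : m = p <;> simp [offDiagBlock, hmp]
  rw [apply_eq_sum_block, Finset.sum_congr rfl fun p _ => hsplit p, Finset.sum_add_distrib,
    Finset.sum_ite_eq]
  simp

theorem offDiagBlock_perm (τ : Equiv.Perm ι)
    (hτ : ∀ v : ι → V, L (fun i => v (τ⁻¹ i)) = fun i => L v (τ⁻¹ i)) (m q : ι) :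
    offDiagBlock L m (τ q) = offDiagBlock L (τ⁻¹ m) q := by
  simp only [offDiagBlock, block_perm L τ hτ, Equiv.Perm.eq_inv_iff_eq, eq_comm]

variable [Group G] (ρ : Representation R G V)
  (hG : ∀ (g : ι → G) (v : ι → V), L (fun i => ρ (g i) (v i)) = fun i => ρ (g i) (L v i))
include hG

theorem block_mulSingle (g : G) (m n p : ι) (w : V) :
    block L n p (ρ ((Pi.mulSingle m g : ι → G) p) w) =
      ρ ((Pi.mulSingle m g : ι → G) n) (block L n p w) := by
  have hsingle : (fun i => ρ ((Pi.mulSingle m g : ι → G) i) ((Pi.single p w : ι → V) i)) =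
      Pi.single p (ρ ((Pi.mulSingle m g : ι → G) p) w) := by
    funext i
    by_cases hi : i = p
    · subst hi; simp
    · simp [Pi.single_eq_of_ne hi]
  simpa [hsingle] using congr_fun (hG (Pi.mulSingle m g) (Pi.single p w)) n

theorem block_diag_comm (g : G) (m : ι) (w : V) :
    block L m m (ρ g w) = ρ g (block L m m w) := by
  simpa using block_mulSingle L ρ hG g m m m w

theorem offDiagBlock_apply_rep (m p : ι) (g : G) (w : V) :
    offDiagBlock L m p (ρ g w) = offDiagBlock L m p w := by
  by_cases hmp : m = p
  · simp [offDiagBlock, hmp]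
  · simpa [offDiagBlock, hmp, Pi.mulSingle_eq_of_ne hmp] using block_mulSingle L ρ hG g p m p w

theorem offDiagBlock_mem_invariants (m p : ι) (w : V) : offDiagBlock L m p w ∈ ρ.invariants := by
  by_cases hmp : m = p
  · simp [offDiagBlock, hmp]
  · exact fun g => by
      simpa [offDiagBlock, hmp, Pi.mulSingle_eq_of_ne (Ne.symm hmp)] using
        (block_mulSingle L ρ hG g m m p w).symm

end Blocks

section Average

variable {k G V W : Type*} [CommRing k] [Group G] [Fintype G] [Invertible (Fintype.card G : k)]
  [AddCommGroup V] [Module k V] [AddCommGroup W] [Module k W] (ρ : Representation k G V)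

theorem apply_averageMap_of_invariant (f : V →ₗ[k] W) (hf : ∀ g v, f (ρ g v) = f v) (v : V) :
    f (ρ.averageMap v) = f v := by
  simp [GroupAlgebra.average, map_sum, hf, Finset.card_univ, ← Nat.cast_smul_eq_nsmul k, smul_smul]

end Average

section InnerProduct

variable {G V : Type*} [Group G] [NormedAddCommGroup V] [InnerProductSpace ℝ V]

theorem exists_linearMap_inner_eq {s : ℕ} (e : Fin s → V) :
    ∃ Ψ : (Fin s → ℝ) →ₗ[ℝ] V, ∀ x ∈ Submodule.span ℝ (Set.range e), Ψ (fun i => ⟪x, e i⟫) = x := by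
  set F := Submodule.span ℝ (Set.range e)
  let Φ : F →ₗ[ℝ] Fin s → ℝ := LinearMap.pi fun i => (innerₛₗ ℝ (e i)).comp F.subtype
  have hΦ : LinearMap.ker Φ = ⊥ := by
    refine LinearMap.ker_eq_bot'.2 fun x hx => ?_
    have hF : F ≤ LinearMap.ker (innerₛₗ ℝ (x : V)) := Submodule.span_le.2 <|
      Set.range_subset_iff.2 fun i => by simpa [Φ, real_inner_comm] using congr_fun hx i
    simpa using hF x.2
  obtain ⟨Ψ, hΨ⟩ := Φ.exists_leftInverse_of_injective hΦ
  refine ⟨F.subtype ∘ₗ Ψ, fun x hx => ?_⟩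
  have hΦx : Φ ⟨x, hx⟩ = fun i => ⟪x, e i⟫ := funext fun i => real_inner_comm _ _
  simpa [hΦx] using congr(($hΨ ⟨x, hx⟩ : V))

variable (ρ : Representation ℝ G V) (hinner : ∀ (g : G) (u v : V), ⟪ρ g u, ρ g v⟫ = ⟪u, v⟫)
  {s : ℕ} {e : Fin s → V}
include hinner

theorem inner_apply_of_mem_invariants {x : V} (hx : x ∈ ρ.invariants) (g : G) (w : V) :
    ⟪ρ g w, x⟫ = ⟪w, x⟫ := by
  conv_lhs => rw [← hx g]
  exact hinner g w x

theorem exists_apply_eq_sum_inner_smul_of_invariant [Finite G] {W : Type*} [AddCommGroup W]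
    [Module ℝ W] (he_span : Submodule.span ℝ (Set.range e) = ρ.invariants) :
    ∃ u : Fin s → V, ∀ B : V →ₗ[ℝ] W, (∀ g w, B (ρ g w) = B w) →
      ∀ w, B w = ∑ i, ⟪w, e i⟫ • B (u i) := by
  have := Fintype.ofFinite G
  have : Invertible (Fintype.card G : ℝ) :=
    invertibleOfNonzero (Nat.cast_ne_zero.2 Fintype.card_ne_zero)
  obtain ⟨Ψ, hΨ⟩ := exists_linearMap_inner_eq e
  refine ⟨fun i => Ψ fun j => if i = j then 1 else 0, fun B hB w => ?_⟩
  have hcoord : (fun i => ⟪ρ.averageMap w, e i⟫) = fun i => ⟪w, e i⟫ := funext fun i => by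
    have he : e i ∈ ρ.invariants := he_span ▸ Submodule.subset_span (Set.mem_range_self i)
    have hinv : ∀ g v, innerₛₗ ℝ (e i) (ρ g v) = innerₛₗ ℝ (e i) v := fun g v => by
      simpa [real_inner_comm] using inner_apply_of_mem_invariants ρ hinner he g v
    simpa [real_inner_comm] using apply_averageMap_of_invariant ρ _ hinv w
  calc B w = B (ρ.averageMap w) := (apply_averageMap_of_invariant ρ B hB w).symm
    _ = B (Ψ fun i => ⟪w, e i⟫) := by
      rw [← hcoord, hΨ _ (he_span ▸ ρ.averageMap_invariant w)]
    _ = ∑ i, ⟪w, e i⟫ • B (Ψ fun j => if i = j then 1 else 0) :=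
      (B ∘ₗ Ψ).pi_apply_eq_sum_univ _

theorem exists_coeff_of_invariant [Finite G]
    (he_span : Submodule.span ℝ (Set.range e) = ρ.invariants) :
    ∃ c : (V →ₗ[ℝ] V) → Fin s → Fin s → ℝ, ∀ B : V →ₗ[ℝ] V, (∀ g w, B (ρ g w) = B w) →
      (∀ w, B w ∈ ρ.invariants) → ∀ w, B w = ∑ i, ∑ j, (c B i j * ⟪w, e i⟫) • e j := by
  obtain ⟨u, hu⟩ := exists_apply_eq_sum_inner_smul_of_invariant ρ hinner (W := V) he_span
  have hspan : ∀ x ∈ ρ.invariants, ∃ d : Fin s → ℝ, ∑ j, d j • e j = x := fun x hx =>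
    (Submodule.mem_span_range_iff_exists_fun ℝ).1 (he_span ▸ hx)
  choose! d hd using hspan
  refine ⟨fun B i j => d (B (u i)) j, fun B hB hBmem w => ?_⟩
  rw [hu B hB w]
  refine Finset.sum_congr rfl fun i _ => ?_
  rw [← hd _ (hBmem (u i)), Finset.smul_sum]
  simp only [smul_smul, mul_comm]

theorem exists_comm_apply_eq_sum (he : ∀ i, e i ∈ ρ.invariants) (a : Fin s → Fin s → ℝ) :
    ∃ R : V →ₗ[ℝ] V, (∀ g w, R (ρ g w) = ρ g (R w)) ∧
      ∀ w, R w = ∑ i, ∑ j, a i j • (⟪w, e i⟫ • e j) := by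
  refine ⟨∑ i, ∑ j, a i j • ((innerₛₗ ℝ).flip (e i)).smulRight (e j), fun g w => ?_,
    fun w => by simp⟩
  have hmem : ∀ w, ∑ i, ∑ j, a i j • (⟪w, e i⟫ • e j) ∈ ρ.invariants := fun w =>
    Submodule.sum_mem _ fun i _ => Submodule.sum_mem _ fun j _ =>
      Submodule.smul_mem _ _ (Submodule.smul_mem _ _ (he j))
  simp [inner_apply_of_mem_invariants ρ hinner (he _), hmem w g]

end InnerProduct

section Wreath

variable {G V : Type*} [Group G] [NormedAddCommGroup V] [InnerProductSpace ℝ V]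
  (ρ : Representation ℝ G V) (hinner : ∀ (g : G) (u v : V), ⟪ρ g u, ρ g v⟫ = ⟪u, v⟫)
  {s : ℕ} {e : Fin s → V} {k : ℕ} {H : Subgroup (Equiv.Perm (Fin k))}
  {L : (Fin k → V) →ₗ[ℝ] (Fin k → V)}
include hinner

theorem exists_eq_siamese_add_sum_HEquivMaps [Finite G]
    (he_span : Submodule.span ℝ (Set.range e) = ρ.invariants) (hk : 1 ≤ k)
    (htrans : ∀ i j : Fin k, ∃ τ ∈ H, τ i = j)
    (hG : ∀ (g : Fin k → G) (v : Fin k → V),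
      L (fun i => ρ (g i) (v i)) = fun i => ρ (g i) (L v i))
    (hH : ∀ τ : Equiv.Perm (Fin k), τ ∈ H → ∀ v : Fin k → V,
      L (fun i => v (τ⁻¹ i)) = fun i => L v (τ⁻¹ i)) :
    ∃ (Lhat : V →ₗ[ℝ] V) (A : Fin s → Fin s → (Fin k → ℝ) →ₗ[ℝ] (Fin k → ℝ)),
      (∀ (g : G) (w : V), Lhat (ρ g w) = ρ g (Lhat w)) ∧ (∀ i j, A i j ∈ HEquivMaps k H) ∧
      ∀ (v : Fin k → V) (m : Fin k),
        L v m = Lhat (v m) + ∑ i, ∑ j, A i j (fun p => ⟪v p, e i⟫) m • e j := by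
  obtain ⟨c, hc⟩ := exists_coeff_of_invariant ρ hinner he_span
  let o : Fin k := ⟨0, hk⟩
  refine ⟨block L o o, fun i j => (Matrix.of fun m p => c (offDiagBlock L m p) i j).mulVecLin,
    fun g => block_diag_comm L ρ hG g o, fun i j => mulVecLin_mem_HEquivMaps _ fun τ hτ m q => ?_,
    fun v m => ?_⟩
  · simp only [Matrix.of_apply, offDiagBlock_perm L τ (hH τ hτ)]
  obtain ⟨τ, hτ, rfl⟩ := htrans o m
  have hdiag : block L (τ o) (τ o) = block L o o := by
    simpa using block_perm L τ (hH τ hτ) (τ o) o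
  rw [apply_eq_block_add_sum_offDiagBlock, hdiag]
  congr 1
  rw [Finset.sum_congr rfl fun p _ => hc _ (offDiagBlock_apply_rep L ρ hG _ p)
    (offDiagBlock_mem_invariants L ρ hG _ p) (v p), Finset.sum_comm]
  refine Finset.sum_congr rfl fun i _ => ?_
  rw [Finset.sum_comm]
  simp [Matrix.mulVec, dotProduct, Finset.sum_smul]

theorem exists_eq_siamese_add_sum_basis [Finite G]
    (he_span : Submodule.span ℝ (Set.range e) = ρ.invariants) (hk : 1 ≤ k)
    (htrans : ∀ i j : Fin k, ∃ τ ∈ H, τ i = j) {h : ℕ} (hh : 1 ≤ h)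
    {T : Fin h → ((Fin k → ℝ) →ₗ[ℝ] (Fin k → ℝ))}
    (hT_span : Submodule.span ℝ (Set.range T) = HEquivMaps k H)
    (hT_last : T ⟨h - 1, Nat.sub_lt hh Nat.one_pos⟩ = LinearMap.id)
    (hG : ∀ (g : Fin k → G) (v : Fin k → V),
      L (fun i => ρ (g i) (v i)) = fun i => ρ (g i) (L v i))
    (hH : ∀ τ : Equiv.Perm (Fin k), τ ∈ H → ∀ v : Fin k → V,
      L (fun i => v (τ⁻¹ i)) = fun i => L v (τ⁻¹ i)) :
    ∃ (Lhat : V →ₗ[ℝ] V) (a : Fin h → Fin s → Fin s → ℝ),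
      (∀ (g : G) (v : V), Lhat (ρ g v) = ρ g (Lhat v)) ∧
      ∀ (v : Fin k → V) (m : Fin k),
        L v m = Lhat (v m) +
          ∑ ℓ ∈ Finset.univ.filter (fun ℓ : Fin h => (ℓ : ℕ) < h - 1),
            ∑ i, ∑ j, a ℓ i j • ((T ℓ (fun p => ⟪v p, e i⟫)) m • e j) := by
  obtain ⟨L₀, A, hL₀, hA, hL⟩ :=
    exists_eq_siamese_add_sum_HEquivMaps ρ hinner he_span hk htrans hG hH
  have hb : ∀ i j, ∃ b : Fin h → ℝ, ∑ ℓ, b ℓ • T ℓ = A i j := fun i j =>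
    (Submodule.mem_span_range_iff_exists_fun ℝ).1 (hT_span ▸ hA i j)
  choose b hb using hb
  have he : ∀ i, e i ∈ ρ.invariants := fun i =>
    he_span ▸ Submodule.subset_span (Set.mem_range_self i)
  obtain ⟨R, hR, hRapply⟩ :=
    exists_comm_apply_eq_sum ρ hinner he fun i j => b i j ⟨h - 1, Nat.sub_lt hh Nat.one_pos⟩
  refine ⟨L₀ + R, fun ℓ i j => b i j ℓ, fun g v => by simp [hL₀, hR], fun v m => ?_⟩
  rw [hL v m, LinearMap.add_apply, hRapply, add_assoc]
  congr 1
  calc ∑ i, ∑ j, A i j (fun p => ⟪v p, e i⟫) m • e j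
      = ∑ ℓ, ∑ i, ∑ j, b i j ℓ • (T ℓ (fun p => ⟪v p, e i⟫) m • e j) := by
        simp only [← hb, LinearMap.sum_apply, LinearMap.smul_apply, Finset.sum_apply,
          Pi.smul_apply, smul_eq_mul, Finset.sum_smul, smul_smul]
        exact (Finset.sum_congr rfl fun i _ => Finset.sum_comm).trans Finset.sum_comm
    _ = _ := by rw [Fin.sum_eq_sum_filter_lt_add_last hh, hT_last, add_comm]; rfl

theorem equivariant_of_eq_siamese_add_sum (he : ∀ i, e i ∈ ρ.invariants) {h : ℕ}
    {T : Fin h → ((Fin k → ℝ) →ₗ[ℝ] (Fin k → ℝ))} (hT : ∀ ℓ, T ℓ ∈ HEquivMaps k H)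
    (Lhat : V →ₗ[ℝ] V) (a : Fin h → Fin s → Fin s → ℝ)
    (hLhat : ∀ (g : G) (v : V), Lhat (ρ g v) = ρ g (Lhat v))
    (hL : ∀ (v : Fin k → V) (m : Fin k),
        L v m = Lhat (v m) +
          ∑ ℓ ∈ Finset.univ.filter (fun ℓ : Fin h => (ℓ : ℕ) < h - 1),
            ∑ i, ∑ j, a ℓ i j • ((T ℓ (fun p => ⟪v p, e i⟫)) m • e j)) :
    (∀ (g : Fin k → G) (v : Fin k → V),
        L (fun i => ρ (g i) (v i)) = fun i => ρ (g i) (L v i)) ∧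
     (∀ τ : Equiv.Perm (Fin k), τ ∈ H → ∀ v : Fin k → V,
        L (fun i => v (τ⁻¹ i)) = fun i => L v (τ⁻¹ i)) := by
  refine ⟨fun g v => funext fun m => ?_, fun τ hτ v => funext fun m => ?_⟩
  · have hmem : ∑ ℓ ∈ Finset.univ.filter (fun ℓ : Fin h => (ℓ : ℕ) < h - 1),
        ∑ i, ∑ j, a ℓ i j • ((T ℓ (fun p => ⟪v p, e i⟫)) m • e j) ∈ ρ.invariants :=
      Submodule.sum_mem _ fun ℓ _ => Submodule.sum_mem _ fun i _ => Submodule.sum_mem _ fun j _ =>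
        Submodule.smul_mem _ _ (Submodule.smul_mem _ _ (he j))
    simp only [hL, inner_apply_of_mem_invariants ρ hinner (he _), map_add, hLhat, hmem (g m)]
  · have hT_apply : ∀ ℓ i, T ℓ (fun p => ⟪v (τ⁻¹ p), e i⟫) m = T ℓ (fun p => ⟪v p, e i⟫) (τ⁻¹ m) :=
      fun ℓ i => congr_fun (hT ℓ τ hτ fun p => ⟪v p, e i⟫) m
    simp only [hL, hT_apply]

end Wreath

/-- Characterization of `(G ≀ H)`-equivariant linear layers on
`Vᵏ`, for a transitive subgroup `H ≤ S_k`: `L` is equivariant for the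
componentwise `Gᵏ`-action and the `H` coordinate-permutation action iff it is a
Siamese map plus a combination of the `(h−1)·s²` non-Siamese maps built from a
basis `e₁, …, e_s` of the fixed space and a basis `T₁, …, T_h` (with `T_h = id`)
of the `H`-equivariant endomorphisms of `ℝᵏ`. -/
theorem wreath_H_equivariant_characterization
    {G V : Type*} [Group G] [Finite G]
    [NormedAddCommGroup V] [InnerProductSpace ℝ V]
    (ρ : Representation ℝ G V)
    (hinner : ∀ (g : G) (u v : V), ⟪ρ g u, ρ g v⟫ = ⟪u, v⟫)
    (s : ℕ) (e : Fin s → V)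
    (he_span : Submodule.span ℝ (Set.range e) = ρ.invariants)
    (k : ℕ) (hk : 1 ≤ k)
    (H : Subgroup (Equiv.Perm (Fin k)))
    (htrans : ∀ i j : Fin k, ∃ τ ∈ H, τ i = j)
    (h : ℕ) (hh : 1 ≤ h)
    (T : Fin h → ((Fin k → ℝ) →ₗ[ℝ] (Fin k → ℝ)))
    (hT_span : Submodule.span ℝ (Set.range T) = HEquivMaps k H)
    (hT_last : T ⟨h - 1, by omega⟩ = LinearMap.id)
    (L : (Fin k → V) →ₗ[ℝ] (Fin k → V)) :
    ((∀ (g : Fin k → G) (v : Fin k → V),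
        L (fun i => ρ (g i) (v i)) = fun i => ρ (g i) (L v i)) ∧
     (∀ τ : Equiv.Perm (Fin k), τ ∈ H → ∀ v : Fin k → V,
        L (fun i => v (τ⁻¹ i)) = fun i => L v (τ⁻¹ i))) ↔
    (∃ (Lhat : V →ₗ[ℝ] V) (a : Fin h → Fin s → Fin s → ℝ),
      (∀ (g : G) (v : V), Lhat (ρ g v) = ρ g (Lhat v)) ∧
      ∀ (v : Fin k → V) (m : Fin k),
        L v m = Lhat (v m) +
          ∑ ℓ ∈ Finset.univ.filter (fun ℓ : Fin h => (ℓ : ℕ) < h - 1),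
            ∑ i, ∑ j, a ℓ i j • ((T ℓ (fun p => ⟪v p, e i⟫)) m • e j)) := by
  have he : ∀ i, e i ∈ ρ.invariants := fun i =>
    he_span ▸ Submodule.subset_span (Set.mem_range_self i)
  have hT : ∀ ℓ, T ℓ ∈ HEquivMaps k H := fun ℓ =>
    hT_span ▸ Submodule.subset_span (Set.mem_range_self ℓ)
  constructor
  · rintro ⟨hG, hH⟩
    exact exists_eq_siamese_add_sum_basis ρ hinner he_span hk htrans hh hT_span hT_last hG hH
  · rintro ⟨Lhat, a, hLhat, hL⟩
    exact equivariant_of_eq_siamese_add_sum ρ hinner he hT Lhat a hLhat hL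

end WreathH
end
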